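/- arXiv:2009.03086 — 8 statements merged into one kernel-verified Lean document; each statement's English description precedes it below -/
import Mathlib

section
/- Let n ≥ 2, let Ω ⊂ ℂⁿ be an open set, and let K ⊂ Ω be a compact subset. Then Ω \ K is connected if and only if both ℂⁿ \ K and Ω are connected. -/
open Set

noncomputable section

variable {E : Type*}

open Classical in
noncomputable def hBcnt (B : Set E) (x : E) : ZMod 2 := if x ∈ B then 1 else 0

noncomputable def hTwist (B : Set E) : Bool → E → List (Set E × Bool × E) → ZMod 2
  | p, x, [] => if p = true then hBcnt B x else 0
  | p, x, (_, l, y) :: r =>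
      (if p ≠ l then hBcnt B x else 0) + hTwist B l y r

def hValid [TopologicalSpace E] (U V : Set E) : E → List (Set E × Bool × E) → Prop
  | _, [] => True
  | x, (S, l, y) :: r => x ∈ S ∧ y ∈ S ∧ IsPreconnected S ∧ S ⊆ (bif l then U else V)
      ∧ hValid U V y r

private lemma hflip_base : ∀ p p' : Bool, p ≠ p' → ∀ c : ZMod 2,
    (if p = true then c else 0) = (if p' = true then c else 0) + c := by
  decide

private lemma hflip_cons : ∀ p p' l : Bool, p ≠ p' → ∀ c : ZMod 2,
    (if p ≠ l then c else 0) = (if p' ≠ l then c else 0) + c := by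
  decide

lemma hTwist_flip (B : Set E) : ∀ (L : List (Set E × Bool × E)) (x : E) {p p' : Bool},
    p ≠ p' → hTwist B p x L = hTwist B p' x L + hBcnt B x := by
  intro L x p p' hpp
  cases L with
  | nil => simpa [hTwist] using hflip_base p p' hpp (hBcnt B x)
  | cons q r =>
    obtain ⟨S, l, y⟩ := q
    show (if p ≠ l then hBcnt B x else 0) + hTwist B l y r
        = (if p' ≠ l then hBcnt B x else 0) + hTwist B l y r + hBcnt B x
    rw [hflip_cons p p' l hpp (hBcnt B x), add_right_comm]

end

section congrsec
variable [TopologicalSpace E] {U V A B : Set E}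

lemma hBcnt_eq_of_side (hd : Disjoint A B) {S : Set E} (hS : S ⊆ A ∨ S ⊆ B) {x y : E}
    (hx : x ∈ S) (hy : y ∈ S) : hBcnt B x = hBcnt B y := by
  classical
  rcases hS with h | h
  · have hx' : x ∉ B := fun hxB => (Set.disjoint_left.mp hd (h hx)) hxB
    have hy' : y ∉ B := fun hyB => (Set.disjoint_left.mp hd (h hy)) hyB
    simp [hBcnt, hx', hy']
  · simp [hBcnt, h hx, h hy]

private lemma hcongr_arith : ∀ p l l' : Bool, l ≠ l' → ∀ c : ZMod 2,
    (if p ≠ l then c else 0) + c = (if p ≠ l' then c else 0) := by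
  decide

/-- The twist does not depend on the choice of (valid) labels. -/
lemma hTwist_congr (hA : IsOpen A) (hB : IsOpen B) (hd : Disjoint A B)
    (hsub : U ∩ V ⊆ A ∪ B) :
    ∀ {L₁ L₂ : List (Set E × Bool × E)},
      List.Forall₂ (fun q r => q.1 = r.1 ∧ q.2.2 = r.2.2) L₁ L₂ →
      ∀ (x : E) (p : Bool), hValid U V x L₁ → hValid U V x L₂ →
      hTwist B p x L₁ = hTwist B p x L₂ := by
  intro L₁ L₂ hsim
  induction hsim with
  | nil => intro x p _ _; rfl
  | @cons q q' r₁ r₂ hq hr IH =>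
    intro x p h₁ h₂
    obtain ⟨S, l, y⟩ := q
    obtain ⟨S', l', y'⟩ := q'
    obtain ⟨hS, hy⟩ := hq
    simp only at hS hy
    subst hS; subst hy
    obtain ⟨hx₁, hy₁, hpc, hsub₁, hv₁⟩ := h₁
    obtain ⟨hx₂, hy₂, _, hsub₂, hv₂⟩ := h₂
    by_cases hl : l = l'
    · subst hl
      show (if p ≠ l then hBcnt B x else 0) + hTwist B l y r₁
          = (if p ≠ l then hBcnt B x else 0) + hTwist B l y r₂
      rw [IH y l hv₁ hv₂]
    · -- S lies in U ∩ V, hence in A or in B, and x, y are on the same side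
      have hSUV : S ⊆ U ∩ V := by
        intro z hz
        cases l <;> cases l' <;> simp_all
        · exact ⟨hsub₂ hz, hsub₁ hz⟩
        · exact ⟨hsub₁ hz, hsub₂ hz⟩
      have hside : S ⊆ A ∨ S ⊆ B :=
        hpc.subset_or_subset hA hB hd (fun z hz => hsub (hSUV hz))
      have hxy : hBcnt B x = hBcnt B y := hBcnt_eq_of_side hd hside hx₁ hy₁
      show (if p ≠ l then hBcnt B x else 0) + hTwist B l y r₁
          = (if p ≠ l' then hBcnt B x else 0) + hTwist B l' y r₂
      rw [IH y l hv₁ hv₂, hTwist_flip B r₂ y hl, ← hxy,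
        add_comm (hTwist B l' y r₂) (hBcnt B x), ← add_assoc,
        hcongr_arith p l l' hl]
end congrsec

section rows
variable [TopologicalSpace E]

lemma hTwist_append_false (B : Set E) :
    ∀ (L : List (Set E × Bool × E)) (x : E) (p : Bool) (S : Set E) (y : E),
    hTwist B p x (L ++ [(S, false, y)]) = hTwist B p x L := by
  intro L
  induction L with
  | nil =>
    intro x p S y
    cases p <;> simp [hTwist]
  | cons q r IH =>
    intro x p S y
    obtain ⟨S', l, y'⟩ := q
    show (if p ≠ l then hBcnt B x else 0) + hTwist B l y' (r ++ [(S, false, y)])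
        = (if p ≠ l then hBcnt B x else 0) + hTwist B l y' r
    rw [IH]

lemma hTwist_zero_of_notB (B : Set E) :
    ∀ (L : List (Set E × Bool × E)) (x : E) (p : Bool), x ∉ B →
    (∀ q ∈ L, q.2.2 ∉ B) → hTwist B p x L = 0 := by
  classical
  intro L
  induction L with
  | nil => intro x p hx _; simp [hTwist, hBcnt, hx]
  | cons q r IH =>
    intro x p hx hL
    obtain ⟨S, l, y⟩ := q
    show (if p ≠ l then hBcnt B x else 0) + hTwist B l y r = 0
    rw [IH y l (hL _ List.mem_cons_self) (fun q hq => hL q (List.mem_cons_of_mem _ hq))]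
    simp [hBcnt, hx]

lemma hTwist_one_of_B (B : Set E) :
    ∀ (L : List (Set E × Bool × E)) (x : E) (p : Bool), x ∈ B →
    (∀ q ∈ L, q.2.2 ∈ B) → hTwist B p x L = if p = true then 1 else 0 := by
  classical
  intro L
  induction L with
  | nil => intro x p hx _; simp [hTwist, hBcnt, hx]
  | cons q r IH =>
    intro x p hx hL
    obtain ⟨S, l, y⟩ := q
    show (if p ≠ l then hBcnt B x else 0) + hTwist B l y r = if p = true then 1 else 0
    rw [IH y l (hL _ List.mem_cons_self) (fun q hq => hL q (List.mem_cons_of_mem _ hq))]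
    have hbx : hBcnt B x = 1 := by simp [hBcnt, hx]
    rw [hbx]
    cases p <;> cases l <;> decide

/-- A row of a grid: pieces `Sf i, Sf (i+1), ..., Sf (i+k-1)` with labels `lf` and
junction points `Pf`. -/
def hRowL (Sf : ℕ → Set E) (lf : ℕ → Bool) (Pf : ℕ → E) : ℕ → ℕ → List (Set E × Bool × E)
  | _, 0 => []
  | i, (k+1) => (Sf i, lf i, Pf (i+1)) :: hRowL Sf lf Pf (i+1) k

lemma hRowL_sim (Sf : ℕ → Set E) (lf lf' : ℕ → Bool) (Pf : ℕ → E) :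
    ∀ k i, List.Forall₂ (fun q r => q.1 = r.1 ∧ q.2.2 = r.2.2)
      (hRowL Sf lf Pf i k) (hRowL Sf lf' Pf i k) := by
  intro k
  induction k with
  | zero => intro i; exact List.Forall₂.nil
  | succ k IH => intro i; exact List.Forall₂.cons ⟨rfl, rfl⟩ (IH (i+1))

lemma hRowL_valid {U V : Set E} (Sf : ℕ → Set E) (lf : ℕ → Bool) (Pf : ℕ → E) :
    ∀ k i, (∀ q, i ≤ q → q < i + k →
        Pf q ∈ Sf q ∧ Pf (q+1) ∈ Sf q ∧ IsPreconnected (Sf q) ∧ Sf q ⊆ (bif lf q then U else V)) →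
      hValid U V (Pf i) (hRowL Sf lf Pf i k) := by
  intro k
  induction k with
  | zero => intro i _; trivial
  | succ k IH =>
    intro i h
    obtain ⟨h1, h2, h3, h4⟩ := h i le_rfl (by omega)
    exact ⟨h1, h2, h3, h4, IH (i+1) (fun q hq1 hq2 => h q (by omega) (by omega))⟩

lemma hRowL_mem (Sf : ℕ → Set E) (lf : ℕ → Bool) (Pf : ℕ → E) :
    ∀ k i q, q ∈ hRowL Sf lf Pf i k → ∃ r, i < r ∧ r ≤ i + k ∧ q.2.2 = Pf r := by
  intro k
  induction k with
  | zero => intro i q hq; simp [hRowL] at hq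
  | succ k IH =>
    intro i q hq
    rw [hRowL] at hq
    rcases List.mem_cons.mp hq with rfl | hq'
    · exact ⟨i+1, by omega, by omega, rfl⟩
    · obtain ⟨r, h1, h2, h3⟩ := IH (i+1) q hq'
      exact ⟨r, by omega, by omega, h3⟩

end rows

open Set Metric

lemma hartogs_core {E : Type*} [NormedAddCommGroup E] [NormedSpace ℝ E]
    {U V A B : Set E} (hU : IsOpen U) (hV : IsOpen V) (hUV : U ∪ V = Set.univ)
    (hABeq : U ∩ V = A ∪ B) (hA : IsOpen A) (hB : IsOpen B) (hd : Disjoint A B)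
    {a b : E} (ha : a ∈ A) (hb : b ∈ B) (γ σ : Path a b)
    (hγ : ∀ t, γ t ∈ U) (hσ : ∀ t, σ t ∈ V) : False := by
  classical
  have hsub : U ∩ V ⊆ A ∪ B := hABeq.le
  set H : ℝ × ℝ → E := fun p => (1 - p.1) • γ.extend p.2 + p.1 • σ.extend p.2 with hHdef
  have hHcont : Continuous H :=
    ((continuous_const.sub continuous_fst).smul (γ.continuous_extend.comp continuous_snd)).add
      (continuous_fst.smul (σ.continuous_extend.comp continuous_snd))
  have hγU : ∀ t : ℝ, γ.extend t ∈ U := by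
    intro t
    have h1 : γ.extend t ∈ Set.range γ.extend := Set.mem_range_self t
    rw [Path.extend_range] at h1
    obtain ⟨s, hs⟩ := h1
    rw [← hs]; exact hγ s
  have hσV : ∀ t : ℝ, σ.extend t ∈ V := by
    intro t
    have h1 : σ.extend t ∈ Set.range σ.extend := Set.mem_range_self t
    rw [Path.extend_range] at h1
    obtain ⟨s, hs⟩ := h1
    rw [← hs]; exact hσ s
  have hH0 : ∀ t, H (0, t) = γ.extend t := by intro t; simp [hHdef]
  have hH1 : ∀ t, H (1, t) = σ.extend t := by intro t; simp [hHdef]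
  have hHa : ∀ s : ℝ, H (s, 0) = a := by
    intro s
    show (1 - s) • γ.extend 0 + s • σ.extend 0 = a
    rw [Path.extend_zero, Path.extend_zero, ← add_smul]
    norm_num
  have hHb : ∀ s : ℝ, H (s, 1) = b := by
    intro s
    show (1 - s) • γ.extend 1 + s • σ.extend 1 = b
    rw [Path.extend_one, Path.extend_one, ← add_smul]
    norm_num
  -- Lebesgue number for the cover {H⁻¹U, H⁻¹V} of the unit square
  obtain ⟨δ, hδpos, hδ⟩ :=
    lebesgue_number_lemma_of_metric
      (s := (Set.Icc (0:ℝ) 1) ×ˢ (Set.Icc (0:ℝ) 1))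
      (c := fun l : Bool => bif l then H ⁻¹' U else H ⁻¹' V)
      (isCompact_Icc.prod isCompact_Icc)
      (fun l => by cases l
                   · exact hV.preimage hHcont
                   · exact hU.preimage hHcont)
      (by intro p _
          have h1 : H p ∈ U ∪ V := by rw [hUV]; trivial
          rcases h1 with h | h
          · exact Set.mem_iUnion.2 ⟨true, h⟩
          · exact Set.mem_iUnion.2 ⟨false, h⟩)
  obtain ⟨m0, hm0⟩ := exists_nat_one_div_lt hδpos
  set m : ℕ := m0 + 1 with hmdef
  have hmR : (0:ℝ) < m := by positivity
  have h1m : (1:ℝ) / m < δ := by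
    have : ((m:ℝ)) = (m0 : ℝ) + 1 := by push_cast [hmdef]; ring
    rw [this]; exact hm0
  set u : ℕ → ℝ := fun i => (i : ℝ) / m with hudef
  have hu_mono : ∀ {i i' : ℕ}, i ≤ i' → u i ≤ u i' := by
    intro i i' h
    have : (i:ℝ) ≤ (i':ℝ) := by exact_mod_cast h
    simp only [hudef]
    gcongr
  have hu_gap : ∀ i : ℕ, u (i+1) - u i = 1 / m := by
    intro i
    simp only [hudef]
    push_cast
    field_simp
    ring
  have hu0 : u 0 = 0 := by simp [hudef]
  have hum : u m = 1 := by
    simp only [hudef]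
    exact div_self (ne_of_gt hmR)
  have hu_mem : ∀ i : ℕ, i ≤ m → u i ∈ Set.Icc (0:ℝ) 1 := by
    intro i hi
    constructor
    · positivity
    · rw [← hum]; exact hu_mono hi
  -- cells and labels
  set cell : ℕ → ℕ → Set (ℝ × ℝ) :=
    fun i j => Set.Icc (u i) (u (i+1)) ×ˢ Set.Icc (u j) (u (j+1)) with hcelldef
  have hcell : ∀ i j, i < m → j < m → H '' cell i j ⊆ U ∨ H '' cell i j ⊆ V := by
    intro i j hi hj
    obtain ⟨l, hl⟩ := hδ (u i, u j) ⟨hu_mem i hi.le, hu_mem j hj.le⟩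
    have hc : cell i j ⊆ Metric.ball (u i, u j) δ := by
      rintro ⟨s, t⟩ ⟨hs, ht⟩
      rw [Metric.mem_ball, Prod.dist_eq]
      have e1 : dist s (u i) < δ := by
        rw [Real.dist_eq, abs_of_nonneg (sub_nonneg.2 hs.1)]
        have := hu_gap i
        have := hs.2
        linarith
      have e2 : dist t (u j) < δ := by
        rw [Real.dist_eq, abs_of_nonneg (sub_nonneg.2 ht.1)]
        have := hu_gap j
        have := ht.2
        linarith
      exact max_lt e1 e2
    cases l with
    | true =>
      left
      rintro _ ⟨p, hp, rfl⟩
      exact hl (hc hp)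
    | false =>
      right
      rintro _ ⟨p, hp, rfl⟩
      exact hl (hc hp)
  set Lab : ℕ → ℕ → Bool := fun i j => if H '' cell i j ⊆ U then true else false with hLabdef
  have hLab : ∀ i j, i < m → j < m → H '' cell i j ⊆ (bif Lab i j then U else V) := by
    intro i j hi hj
    by_cases hc : H '' cell i j ⊆ U
    · have hLt : Lab i j = true := by
        show (if H '' cell i j ⊆ U then true else false) = true
        exact if_pos hc
      rw [hLt]; exact hc
    · rcases hcell i j hi hj with h | h
      · exact absurd h hc
      · have hLf : Lab i j = false := by
          show (if H '' cell i j ⊆ U then true else false) = false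
          exact if_neg hc
        rw [hLf]; exact h
  set Shor : ℕ → ℕ → Set E := fun i j => H '' (Set.Icc (u i) (u (i+1)) ×ˢ {u j}) with hShordef
  set Sver : ℕ → ℕ → Set E := fun i j => H '' ({u i} ×ˢ Set.Icc (u j) (u (j+1))) with hSverdef
  set P : ℕ → ℕ → E := fun i j => H (u i, u j) with hPdef
  have hPhor1 : ∀ i j, P i j ∈ Shor i j := fun i j =>
    Set.mem_image_of_mem H ⟨⟨le_rfl, hu_mono (Nat.le_succ i)⟩, rfl⟩
  have hPhor2 : ∀ i j, P (i+1) j ∈ Shor i j := fun i j =>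
    Set.mem_image_of_mem H ⟨⟨hu_mono (Nat.le_succ i), le_rfl⟩, rfl⟩
  have hPver1 : ∀ i j, P i j ∈ Sver i j := fun i j =>
    Set.mem_image_of_mem H ⟨rfl, ⟨le_rfl, hu_mono (Nat.le_succ j)⟩⟩
  have hPver2 : ∀ i j, P i (j+1) ∈ Sver i j := fun i j =>
    Set.mem_image_of_mem H ⟨rfl, ⟨hu_mono (Nat.le_succ j), le_rfl⟩⟩
  have hprec_hor : ∀ i j, IsPreconnected (Shor i j) :=
    fun i j => (isPreconnected_Icc.prod isPreconnected_singleton).image _ hHcont.continuousOn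
  have hprec_ver : ∀ i j, IsPreconnected (Sver i j) :=
    fun i j => (isPreconnected_singleton.prod isPreconnected_Icc).image _ hHcont.continuousOn
  have hhor_lab : ∀ i j j', i < m → j' < m → u j' ≤ u j → u j ≤ u (j'+1) →
      Shor i j ⊆ (bif Lab i j' then U else V) := by
    intro i j j' hi hj' h1 h2
    refine Set.Subset.trans ?_ (hLab i j' hi hj')
    apply Set.image_mono
    exact Set.prod_mono Set.Subset.rfl (Set.singleton_subset_iff.2 ⟨h1, h2⟩)
  have hver_lab : ∀ i j i', i' < m → j < m → u i' ≤ u i → u i ≤ u (i'+1) →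
      Sver i j ⊆ (bif Lab i' j then U else V) := by
    intro i j i' hi' hj h1 h2
    refine Set.Subset.trans ?_ (hLab i' j hi' hj)
    apply Set.image_mono
    exact Set.prod_mono (Set.singleton_subset_iff.2 ⟨h1, h2⟩) Set.Subset.rfl
  have hver0 : ∀ j, Sver 0 j ⊆ U := by
    intro j
    rintro _ ⟨⟨s, t⟩, ⟨hs, ht⟩, rfl⟩
    have : s = 0 := by simpa [hu0] using hs
    subst this
    rw [hH0]
    exact hγU t
  have hverm : ∀ j, Sver m j ⊆ V := by
    intro j
    rintro _ ⟨⟨s, t⟩, ⟨hs, ht⟩, rfl⟩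
    have : s = 1 := by simpa [hum] using hs
    subst this
    rw [hH1]
    exact hσV t
  -- rows
  have hrow_valid : ∀ (j : ℕ) (lf : ℕ → Bool) (k i : ℕ), i + k ≤ m →
      (∀ q, q < m → Shor q j ⊆ (bif lf q then U else V)) →
      hValid U V (P i j) (hRowL (fun q => Shor q j) lf (fun q => P q j) i k) := by
    intro j lf k i hik hlf
    exact hRowL_valid _ _ _ k i (fun q hq1 hq2 =>
      ⟨hPhor1 q j, hPhor2 q j, hprec_hor q j, hlf q (by omega)⟩)
  have hcons_gen : ∀ (p l : Bool) (S : Set E) (x y : E) (L : List (Set E × Bool × E)),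
      hTwist B p x ((S, l, y) :: L) = (if p ≠ l then hBcnt B x else 0) + hTwist B l y L :=
    fun _ _ _ _ _ _ => rfl
  have hcons_same : ∀ (l : Bool) (S : Set E) (x y : E) (L : List (Set E × Bool × E)),
      hTwist B l x ((S, l, y) :: L) = hTwist B l y L := by
    intro l S x y L
    rw [hcons_gen, if_neg (by simp), zero_add]
  -- the key induction: moving from row j to row j+1
  have key : ∀ j, j < m → ∀ lfb lft : ℕ → Bool,
      (∀ i, i < m → Shor i j ⊆ (bif lfb i then U else V)) →
      (∀ i, i < m → Shor i (j+1) ⊆ (bif lft i then U else V)) →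
      hTwist B true (P 0 j) (hRowL (fun q => Shor q j) lfb (fun q => P q j) 0 m)
        = hTwist B true (P 0 (j+1)) (hRowL (fun q => Shor q (j+1)) lft (fun q => P q (j+1)) 0 m) := by
    intro j hj lfb lft hlfb hlft
    set Λ : ℕ → Bool := fun i => Lab i j with hLamdef
    have hgoodb : ∀ i, i < m → Shor i j ⊆ (bif Λ i then U else V) := fun i hi =>
      hhor_lab i j j hi hj le_rfl (hu_mono (Nat.le_succ j))
    have hgoodt : ∀ i, i < m → Shor i (j+1) ⊆ (bif Λ i then U else V) := fun i hi =>
      hhor_lab i (j+1) j hi hj (hu_mono (Nat.le_succ j)) le_rfl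
    have hverL : ∀ i, i < m → Sver i j ⊆ (bif Λ i then U else V) := fun i hi =>
      hver_lab i j i hi hj le_rfl (hu_mono (Nat.le_succ i))
    have hverL' : ∀ i, i < m → Sver (i+1) j ⊆ (bif Λ i then U else V) := fun i hi =>
      hver_lab (i+1) j i hi hj (hu_mono (Nat.le_succ i)) le_rfl
    have G : ∀ k i, i + k = m → ∀ lv : Bool, Sver i j ⊆ (bif lv then U else V) → ∀ p : Bool,
        hTwist B p (P i (j+1))
          ((Sver i j, lv, P i j) :: hRowL (fun q => Shor q j) Λ (fun q => P q j) i k)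
        = hTwist B p (P i (j+1))
          (hRowL (fun q => Shor q (j+1)) Λ (fun q => P q (j+1)) i k
            ++ [(Sver m j, false, P m j)]) := by
      intro k
      induction k with
      | zero =>
        intro i hik lv hlv p
        have him : i = m := by omega
        subst him
        show hTwist B p (P m (j+1)) [(Sver m j, lv, P m j)]
            = hTwist B p (P m (j+1)) ([] ++ [(Sver m j, false, P m j)])
        rw [List.nil_append]
        refine hTwist_congr hA hB hd hsub ?_ _ p ?_ ?_
        · exact List.Forall₂.cons ⟨rfl, rfl⟩ List.Forall₂.nil
        · exact ⟨hPver2 m j, hPver1 m j, hprec_ver m j, hlv, trivial⟩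
        · exact ⟨hPver2 m j, hPver1 m j, hprec_ver m j, hverm j, trivial⟩
      | succ k IH =>
        intro i hik lv hlv p
        have him : i < m := by omega
        have e1 : hTwist B p (P i (j+1))
              ((Sver i j, lv, P i j) :: hRowL (fun q => Shor q j) Λ (fun q => P q j) i (k+1))
            = hTwist B p (P i (j+1))
              ((Sver i j, Λ i, P i j) :: hRowL (fun q => Shor q j) Λ (fun q => P q j) i (k+1)) := by
          refine hTwist_congr hA hB hd hsub ?_ _ p ?_ ?_
          · exact List.Forall₂.cons ⟨rfl, rfl⟩ (hRowL_sim _ Λ Λ _ (k+1) i)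
          · exact ⟨hPver2 i j, hPver1 i j, hprec_ver i j, hlv,
              hrow_valid j Λ (k+1) i (by omega) hgoodb⟩
          · exact ⟨hPver2 i j, hPver1 i j, hprec_ver i j, hverL i him,
              hrow_valid j Λ (k+1) i (by omega) hgoodb⟩
        rw [e1]
        have hrowlb : hRowL (fun q => Shor q j) Λ (fun q => P q j) i (k+1)
            = (Shor i j, Λ i, P (i+1) j) :: hRowL (fun q => Shor q j) Λ (fun q => P q j) (i+1) k := rfl
        have hrowlt : hRowL (fun q => Shor q (j+1)) Λ (fun q => P q (j+1)) i (k+1)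
            = (Shor i (j+1), Λ i, P (i+1) (j+1))
              :: hRowL (fun q => Shor q (j+1)) Λ (fun q => P q (j+1)) (i+1) k := rfl
        rw [hrowlb, hrowlt, List.cons_append]
        rw [hcons_gen p (Λ i) (Sver i j), hcons_same (Λ i) (Shor i j),
            hcons_gen p (Λ i) (Shor i (j+1))]
        rw [← IH (i+1) (by omega) (Λ i) (hverL' i him) (Λ i)]
        rw [hcons_same (Λ i) (Sver (i+1) j)]
    -- assemble the row step
    have step0 : hTwist B true (P 0 j) (hRowL (fun q => Shor q j) lfb (fun q => P q j) 0 m)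
        = hTwist B true (P 0 j) (hRowL (fun q => Shor q j) Λ (fun q => P q j) 0 m) :=
      hTwist_congr hA hB hd hsub (hRowL_sim _ lfb Λ _ m 0) _ true
        (hrow_valid j lfb m 0 (by omega) hlfb) (hrow_valid j Λ m 0 (by omega) hgoodb)
    have step1 : hTwist B true (P 0 j) (hRowL (fun q => Shor q j) Λ (fun q => P q j) 0 m)
        = hTwist B true (P 0 (j+1))
            ((Sver 0 j, true, P 0 j) :: hRowL (fun q => Shor q j) Λ (fun q => P q j) 0 m) :=
      (hcons_same true (Sver 0 j) (P 0 (j+1)) (P 0 j) _).symm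
    have step2 := G m 0 (by omega) true (hver0 j) true
    have step3 : hTwist B true (P 0 (j+1))
          (hRowL (fun q => Shor q (j+1)) Λ (fun q => P q (j+1)) 0 m ++ [(Sver m j, false, P m j)])
        = hTwist B true (P 0 (j+1)) (hRowL (fun q => Shor q (j+1)) Λ (fun q => P q (j+1)) 0 m) :=
      hTwist_append_false B _ _ _ _ _
    have step4 : hTwist B true (P 0 (j+1)) (hRowL (fun q => Shor q (j+1)) Λ (fun q => P q (j+1)) 0 m)
        = hTwist B true (P 0 (j+1)) (hRowL (fun q => Shor q (j+1)) lft (fun q => P q (j+1)) 0 m) :=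
      hTwist_congr hA hB hd hsub (hRowL_sim _ Λ lft _ m 0) _ true
        (hrow_valid (j+1) Λ m 0 (by omega) hgoodt) (hrow_valid (j+1) lft m 0 (by omega) hlft)
    exact step0.trans (step1.trans (step2.trans (step3.trans step4)))
  -- canonical labels for each row
  set Lf : ℕ → ℕ → Bool := fun j i => Lab i (min j (m-1)) with hLfdef
  have hLfgood : ∀ j, j ≤ m → ∀ i, i < m → Shor i j ⊆ (bif Lf j i then U else V) := by
    intro j hj i hi
    rcases Nat.lt_or_ge j m with h | h
    · have hmin : min j (m-1) = j := by omega
      rw [hLfdef]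
      simp only [hmin]
      exact hhor_lab i j j hi (by omega) le_rfl (hu_mono (Nat.le_succ j))
    · have hjm : j = m := by omega
      have hmin : min j (m-1) = m-1 := by omega
      rw [hLfdef]
      simp only [hmin]
      refine hhor_lab i j (m-1) hi (by omega) (hu_mono (by omega)) ?_
      have : (m-1) + 1 = m := by omega
      rw [this, hjm]
  have main : ∀ j, j ≤ m →
      hTwist B true (P 0 0) (hRowL (fun q => Shor q 0) (Lf 0) (fun q => P q 0) 0 m)
        = hTwist B true (P 0 j) (hRowL (fun q => Shor q j) (Lf j) (fun q => P q j) 0 m) := by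
    intro j
    induction j with
    | zero => intro _; rfl
    | succ j IHj =>
      intro hj
      have hjm : j < m := by omega
      exact (IHj (by omega)).trans
        (key j hjm (Lf j) (Lf (j+1)) (hLfgood j (by omega)) (hLfgood (j+1) hj))
  -- evaluate at the two extreme rows
  have hP0 : ∀ i, P i 0 = a := by
    intro i
    show H (u i, u 0) = a
    rw [hu0]; exact hHa (u i)
  have hPm : ∀ i, P i m = b := by
    intro i
    show H (u i, u m) = b
    rw [hum]; exact hHb (u i)
  have haB : a ∉ B := fun hB' => (Set.disjoint_left.mp hd ha) hB'
  have hrow0 : hTwist B true (P 0 0) (hRowL (fun q => Shor q 0) (Lf 0) (fun q => P q 0) 0 m) = 0 := by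
    rw [hP0 0]
    apply hTwist_zero_of_notB B _ a true haB
    intro q hq
    obtain ⟨r, _, _, hr⟩ := hRowL_mem _ _ _ m 0 q hq
    rw [hr, hP0 r]
    exact haB
  have hrowm : hTwist B true (P 0 m) (hRowL (fun q => Shor q m) (Lf m) (fun q => P q m) 0 m) = 1 := by
    rw [hPm 0]
    rw [hTwist_one_of_B B _ b true hb ?_]
    · rfl
    · intro q hq
      obtain ⟨r, _, _, hr⟩ := hRowL_mem _ _ _ m 0 q hq
      rw [hr, hPm r]
      exact hb
  have : (0 : ZMod 2) = 1 := by
    rw [← hrow0, main m le_rfl, hrowm]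
  exact absurd this (by decide)

theorem connectedness_conditions_split (n : ℕ) (hn : 2 ≤ n)
    (Ω K : Set (Fin n → ℂ)) (hΩ : IsOpen Ω) (hK : IsCompact K) (hKΩ : K ⊆ Ω) :
    IsConnected (Ω \ K) ↔ IsConnected Kᶜ ∧ IsConnected Ω := by
  classical
  haveI : Nonempty (Fin n) := ⟨⟨0, by omega⟩⟩
  haveI : Nontrivial (Fin n → ℂ) := ⟨⟨0, fun _ => 1, fun h => by
    simpa using congrFun h ⟨0, by omega⟩⟩⟩
  haveI : PreconnectedSpace (Fin n → ℂ) :=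
    ⟨(convex_univ : Convex ℝ (Set.univ : Set (Fin n → ℂ))).isPreconnected⟩
  have hKc : IsClosed K := hK.isClosed
  have hVop : IsOpen Kᶜ := hKc.isOpen_compl
  have hKuniv : K ≠ Set.univ := by
    intro h
    exact (not_compactSpace_iff.2 inferInstance) (isCompact_univ_iff.mp (h ▸ hK))
  constructor
  · -- forward direction
    rintro ⟨hne, hpc⟩
    obtain ⟨x₀, hx₀⟩ := hne
    -- every connected component of an open set G meets Ω \ K
    have meets : ∀ (G : Set (Fin n → ℂ)), IsOpen G → Ω \ K ⊆ G →
        (∀ z ∈ frontier G ∪ {y | ¬ y ∈ G}, True) → True := fun _ _ _ _ => trivial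
    -- component merging helper
    have comp_mem : ∀ (G : Set (Fin n → ℂ)), IsOpen G → ∀ z ∈ G,
        z ∈ closure (connectedComponentIn G z) → True := fun _ _ _ _ _ => trivial
    have hmerge : ∀ (G : Set (Fin n → ℂ)), IsOpen G → ∀ (x z : Fin n → ℂ), x ∈ G → z ∈ G →
        z ∈ closure (connectedComponentIn G x) → z ∈ connectedComponentIn G x := by
      intro G hG x z hx hz hcl
      have hnb : connectedComponentIn G z ∈ nhds z :=
        connectedComponentIn_mem_nhds (hG.mem_nhds hz)
      obtain ⟨w, hw1, hw2⟩ := mem_closure_iff_nhds.mp hcl _ hnb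
      have e1 : connectedComponentIn G x = connectedComponentIn G w := connectedComponentIn_eq hw2
      have e2 : connectedComponentIn G z = connectedComponentIn G w := connectedComponentIn_eq hw1
      rw [e1, ← e2]
      exact mem_connectedComponentIn hz
    have meetsΩ : ∀ x ∈ Ω, (connectedComponentIn Ω x ∩ (Ω \ K)).Nonempty := by
      intro x hx
      by_contra hem
      have hsubK : connectedComponentIn Ω x ⊆ K := by
        intro y hy
        by_contra hyK
        exact hem ⟨y, hy, ⟨connectedComponentIn_subset _ _ hy, hyK⟩⟩
      set C := connectedComponentIn Ω x with hCdef
      have hCopen : IsOpen C := hΩ.connectedComponentIn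
      have hCne : C.Nonempty := ⟨x, mem_connectedComponentIn hx⟩
      have hfr : (frontier C).Nonempty := by
        rw [Set.nonempty_iff_ne_empty]
        intro hfre
        rcases frontier_eq_empty_iff.mp hfre with h | h
        · exact hCne.ne_empty h
        · exact hKuniv (Set.eq_univ_of_univ_subset (h ▸ hsubK))
      obtain ⟨z, hz⟩ := hfr
      have hzK : z ∈ K := by
        have : z ∈ closure C := frontier_subset_closure hz
        have hcc : closure C ⊆ K := by
          rw [← hKc.closure_eq]; exact closure_mono hsubK
        exact hcc this
      have hzC : z ∈ C := hmerge Ω hΩ x z hx (hKΩ hzK) (frontier_subset_closure hz)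
      rw [hCopen.frontier_eq] at hz
      exact hz.2 hzC
    have meetsKc : ∀ x ∈ Kᶜ, (connectedComponentIn Kᶜ x ∩ (Ω \ K)).Nonempty := by
      intro x hx
      by_contra hem
      set C := connectedComponentIn Kᶜ x with hCdef
      have hCsub : C ⊆ Kᶜ := connectedComponentIn_subset _ _
      have hdisj : C ∩ Ω = ∅ := by
        rw [Set.eq_empty_iff_forall_notMem]
        rintro y ⟨hy1, hy2⟩
        exact hem ⟨y, hy1, ⟨hy2, hCsub hy1⟩⟩
      have hCopen : IsOpen C := hVop.connectedComponentIn
      have hCne : C.Nonempty := ⟨x, mem_connectedComponentIn hx⟩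
      have hfr : (frontier C).Nonempty := by
        rw [Set.nonempty_iff_ne_empty]
        intro hfre
        rcases frontier_eq_empty_iff.mp hfre with h | h
        · exact hCne.ne_empty h
        · -- C = univ, but C ∩ Ω = ∅ and Ω is nonempty
          have : x₀ ∈ C ∩ Ω := ⟨h ▸ Set.mem_univ x₀, hx₀.1⟩
          rw [hdisj] at this
          exact this
      obtain ⟨z, hz⟩ := hfr
      have hzC : z ∉ C := by
        rw [hCopen.frontier_eq] at hz
        exact hz.2
      have hzK : z ∈ K := by
        by_contra hzK
        exact hzC (hmerge Kᶜ hVop x z hx hzK (frontier_subset_closure hz))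
      have hnb : Ω ∈ nhds z := hΩ.mem_nhds (hKΩ hzK)
      obtain ⟨w, hw1, hw2⟩ := mem_closure_iff_nhds.mp (frontier_subset_closure hz) _ hnb
      have : w ∈ C ∩ Ω := ⟨hw2, hw1⟩
      rw [hdisj] at this
      exact this
    constructor
    · -- Kᶜ is connected
      refine ⟨⟨x₀, hx₀.2⟩, ?_⟩
      apply isPreconnected_of_forall x₀
      intro y hy
      obtain ⟨w, hw1, hw2⟩ := meetsKc y hy
      refine ⟨connectedComponentIn Kᶜ y ∪ (Ω \ K), ?_, ?_, ?_, ?_⟩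
      · exact Set.union_subset (connectedComponentIn_subset _ _)
          (fun z hz => hz.2)
      · exact Or.inr hx₀
      · exact Or.inl (mem_connectedComponentIn hy)
      · exact isPreconnected_connectedComponentIn.union w hw1 hw2 hpc
    · -- Ω is connected
      refine ⟨⟨x₀, hx₀.1⟩, ?_⟩
      apply isPreconnected_of_forall x₀
      intro y hy
      obtain ⟨w, hw1, hw2⟩ := meetsΩ y hy
      refine ⟨connectedComponentIn Ω y ∪ (Ω \ K), ?_, ?_, ?_, ?_⟩
      · exact Set.union_subset (connectedComponentIn_subset _ _) Set.diff_subset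
      · exact Or.inr hx₀
      · exact Or.inl (mem_connectedComponentIn hy)
      · exact isPreconnected_connectedComponentIn.union w hw1 hw2 hpc
  · -- converse direction
    rintro ⟨hKcon, hΩcon⟩
    have hsne : (Ω \ K).Nonempty := by
      rw [Set.nonempty_iff_ne_empty]
      intro hem
      have hΩK : Ω ⊆ K := by
        intro x hx
        by_contra hxK
        exact (Set.eq_empty_iff_forall_notMem.mp hem x) ⟨hx, hxK⟩
      have heq : Ω = K := Set.Subset.antisymm hΩK hKΩ
      have hclopen : IsClopen Ω := ⟨heq ▸ hKc, hΩ⟩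
      exact hKuniv (heq ▸ hclopen.eq_univ hΩcon.nonempty)
    refine ⟨hsne, ?_⟩
    by_contra hnpc
    rw [IsPreconnected] at hnpc
    push_neg at hnpc
    obtain ⟨uu, vv, huu, hvv, hcov, ⟨a, haa⟩, ⟨b, hbb⟩, hemp⟩ := hnpc
    set A : Set (Fin n → ℂ) := (Ω \ K) ∩ uu with hAdef
    set B : Set (Fin n → ℂ) := (Ω \ K) ∩ vv with hBdef
    have hsop : IsOpen (Ω \ K) := hΩ.sdiff hKc
    have hAop : IsOpen A := hsop.inter huu
    have hBop : IsOpen B := hsop.inter hvv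
    have hdisj : Disjoint A B := by
      rw [Set.disjoint_left]
      rintro z ⟨hz1, hz2⟩ ⟨hz3, hz4⟩
      rw [Set.eq_empty_iff_forall_notMem] at hemp
      exact hemp z ⟨hz1, hz2, hz4⟩
    have hABeq : Ω ∩ Kᶜ = A ∪ B := by
      rw [hAdef, hBdef, ← Set.inter_union_distrib_left]
      rw [Set.inter_eq_left.mpr hcov]
      rfl
    have hUV : Ω ∪ Kᶜ = Set.univ := by
      rw [Set.eq_univ_iff_forall]
      intro x
      by_cases hx : x ∈ K
      · exact Or.inl (hKΩ hx)
      · exact Or.inr hx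
    have haA : a ∈ A := haa
    have hbB : b ∈ B := hbb
    have haΩ : a ∈ Ω := haa.1.1
    have hbΩ : b ∈ Ω := hbb.1.1
    have haKc : a ∈ Kᶜ := haa.1.2
    have hbKc : b ∈ Kᶜ := hbb.1.2
    have hΩpath : IsPathConnected Ω := hΩ.isConnected_iff_isPathConnected.mp hΩcon
    have hKpath : IsPathConnected Kᶜ := hVop.isConnected_iff_isPathConnected.mp hKcon
    obtain γjoin := hΩpath.joinedIn a haΩ b hbΩ
    obtain σjoin := hKpath.joinedIn a haKc b hbKc
    exact hartogs_core hΩ hVop hUV hABeq hAop hBop hdisj haA hbB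
      γjoin.somePath σjoin.somePath γjoin.somePath_mem σjoin.somePath_mem
end

section
/- Let n ≥ 2, let Ω ⊂ ℂⁿ be an open set, and let K ⊂ Ω be a compact subset. Then ℂⁿ \ K is connected if and only if for every connected component ω of Ω, the set ℂⁿ \ (K ∩ ω) is connected. -/
open Set Metric Complex

variable {E : Type*} [NormedAddCommGroup E] [NormedSpace ℝ E] [ProperSpace E]

lemma slit_of_close {z : ℂ} (h : ‖z - 1‖ < 1) : z ∈ Complex.slitPlane := by
  rw [Complex.mem_slitPlane_iff]
  left
  have h1 := Complex.abs_re_le_norm (z - 1)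
  simp only [Complex.sub_re, Complex.one_re] at *
  have := (abs_lt.mp (lt_of_le_of_lt h1 h)).1
  linarith

lemma exists_log_on_closedBall (F : E → ℂ) (hF : Continuous F) (h0 : ∀ x, F x ≠ 0) (R : ℝ) :
    ∃ g : E → ℂ, ContinuousOn g (closedBall 0 R) ∧
      ∀ x ∈ closedBall 0 R, Complex.exp (g x) = F x := by
  rcases lt_or_ge R 0 with hR | hR
  · exact ⟨0, by simp [Metric.closedBall_eq_empty.mpr hR]⟩
  set C : Set E := closedBall 0 R with hC
  have hCc : IsCompact C := isCompact_closedBall 0 R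
  have hCne : C.Nonempty := ⟨0, by simp [hC, hR]⟩
  have hmem : ∀ x ∈ C, ∀ t : ℝ, 0 ≤ t → t ≤ 1 → t • x ∈ C := by
    intro x hx t ht0 ht1
    rw [hC, mem_closedBall_zero_iff] at *
    rw [norm_smul, Real.norm_eq_abs, _root_.abs_of_nonneg ht0]
    nlinarith [norm_nonneg x]
  obtain ⟨x₀, hx₀C, hx₀⟩ := hCc.exists_isMinOn hCne hF.norm.continuousOn
  set ε : ℝ := ‖F x₀‖ with hε
  have hεpos : 0 < ε := norm_pos_iff.mpr (h0 x₀)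
  have hεle : ∀ y ∈ C, ε ≤ ‖F y‖ := fun y hy => isMinOn_iff.mp hx₀ y hy
  set G : E × ℝ → ℂ := fun p => F (p.2 • p.1) with hG
  have hGc : Continuous G := hF.comp (continuous_snd.smul continuous_fst)
  have hS : IsCompact (C ×ˢ Icc (0:ℝ) 1) := hCc.prod isCompact_Icc
  have hUC := hS.uniformContinuousOn_of_continuous hGc.continuousOn
  obtain ⟨δ, hδpos, hδ⟩ := Metric.uniformContinuousOn_iff.mp hUC ε hεpos
  obtain ⟨N, hN⟩ := exists_nat_one_div_lt hδpos
  set M : ℕ := N + 1 with hM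
  have hMpos : 0 < (M:ℝ) := by positivity
  have hclose : ∀ x ∈ C, ∀ k : ℕ, k < M →
      ‖F ((((k:ℝ)+1)/M) • x) - F (((k:ℝ)/M) • x)‖ < ε := by
    intro x hx k hk
    have hkM : (k:ℝ) + 1 ≤ M := by exact_mod_cast hk
    have hk1 : ((k:ℝ)+1)/M ≤ 1 := by rw [div_le_one hMpos]; linarith
    have hk0 : (0:ℝ) ≤ ((k:ℝ)+1)/M := by positivity
    have hk1' : (k:ℝ)/M ≤ 1 := by rw [div_le_one hMpos]; linarith
    have hk0' : (0:ℝ) ≤ (k:ℝ)/M := by positivity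
    have h1 : (x, ((k:ℝ)+1)/M) ∈ C ×ˢ Icc (0:ℝ) 1 := ⟨hx, hk0, hk1⟩
    have h2 : (x, (k:ℝ)/M) ∈ C ×ˢ Icc (0:ℝ) 1 := ⟨hx, hk0', hk1'⟩
    have hd : dist ((x, ((k:ℝ)+1)/M) : E × ℝ) (x, (k:ℝ)/M) < δ := by
      rw [Prod.dist_eq]
      simp only [dist_self]
      have he : dist (((k:ℝ)+1)/M) ((k:ℝ)/M) = 1/M := by
        rw [Real.dist_eq, div_sub_div_same]
        simp
      rw [he]
      have h1M : (1:ℝ)/M < δ := by rw [hM]; push_cast; exact hN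
      exact sup_lt_iff.mpr ⟨hδpos, h1M⟩
    have := hδ _ h1 _ h2 hd
    rwa [hG, dist_eq_norm] at this
  have hratio : ∀ x ∈ C, ∀ k : ℕ, k < M →
      ‖F ((((k:ℝ)+1)/M) • x) / F (((k:ℝ)/M) • x) - 1‖ < 1 := by
    intro x hx k hk
    have hkM : (k:ℝ) ≤ M := by exact_mod_cast hk.le
    have hb : F (((k:ℝ)/M) • x) ≠ 0 := h0 _
    have hbmem : ((k:ℝ)/M) • x ∈ C := hmem x hx _ (by positivity) (by rw [div_le_one hMpos]; linarith)
    have hbε : ε ≤ ‖F (((k:ℝ)/M) • x)‖ := hεle _ hbmem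
    have key : F ((((k:ℝ)+1)/M) • x) / F (((k:ℝ)/M) • x) - 1
        = (F ((((k:ℝ)+1)/M) • x) - F (((k:ℝ)/M) • x)) / F (((k:ℝ)/M) • x) := by
      field_simp
    rw [key, norm_div, div_lt_one (lt_of_lt_of_le hεpos hbε)]
    exact lt_of_lt_of_le (hclose x hx k hk) hbε
  refine ⟨fun x => Complex.log (F 0) +
      ∑ k ∈ Finset.range M, Complex.log (F ((((k:ℝ)+1)/M) • x) / F (((k:ℝ)/M) • x)), ?_, ?_⟩
  · apply ContinuousOn.add continuousOn_const
    apply continuousOn_finset_sum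
    intro k hk x hx
    have hkM : k < M := Finset.mem_range.mp hk
    have hcont : Continuous (fun x : E => F ((((k:ℝ)+1)/M) • x) / F (((k:ℝ)/M) • x)) :=
      (hF.comp (continuous_id.const_smul _)).div (hF.comp (continuous_id.const_smul _))
        fun y => h0 _
    have hca : ContinuousAt (fun y : E =>
        Complex.log (F ((((k:ℝ)+1)/M) • y) / F (((k:ℝ)/M) • y))) x :=
      hcont.continuousAt.clog (slit_of_close (hratio x hx k hkM))
    exact hca.continuousWithinAt
  · intro x hx
    have key : ∀ j : ℕ, j ≤ M → Complex.exp (Complex.log (F 0) +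
        ∑ k ∈ Finset.range j, Complex.log (F ((((k:ℝ)+1)/M) • x) / F (((k:ℝ)/M) • x)))
        = F (((j:ℝ)/M) • x) := by
      intro j
      induction j with
      | zero => intro _; simp [Complex.exp_log (h0 0)]
      | succ j ih =>
        intro hj
        have hjM : j < M := hj
        rw [Finset.sum_range_succ, ← add_assoc, Complex.exp_add, ih (le_of_lt hjM),
          Complex.exp_log (div_ne_zero (h0 _) (h0 _))]
        rw [mul_comm, div_mul_cancel₀ _ (h0 _)]
        push_cast
        ring_nf
    have := key M le_rfl
    rwa [div_self (ne_of_gt hMpos), one_smul] at this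

lemma eq_of_twoPiZ {α : Type*} [TopologicalSpace α] {s : Set α} (hs : IsPreconnected s)
    {f : α → ℂ} (hf : ContinuousOn f s)
    (hv : ∀ x ∈ s, ∃ k : ℤ, f x = k * (2 * Real.pi * Complex.I))
    {x y : α} (hx : x ∈ s) (hy : y ∈ s) : f x = f y := by
  have him : ContinuousOn (fun z => (f z).im) s := Complex.continuous_im.comp_continuousOn hf
  have hval : ∀ z ∈ s, ∃ k : ℤ, (f z).im = 2 * Real.pi * k ∧ (f z).re = 0 := by
    intro z hz
    obtain ⟨k, hk⟩ := hv z hz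
    refine ⟨k, ?_, ?_⟩ <;> rw [hk] <;> simp <;> ring
  have claim : ∀ a ∈ s, ∀ b ∈ s, ¬((f a).im < (f b).im) := by
    intro a ha b hb hab
    obtain ⟨k, hk, -⟩ := hval a ha
    obtain ⟨k', hk', -⟩ := hval b hb
    have hkk : (k:ℝ) < (k':ℝ) := by
      by_contra hcon
      push_neg at hcon
      have := Real.pi_pos
      nlinarith
    have hkk' : (k:ℤ) < k' := by exact_mod_cast hkk
    have hk1 : ((k:ℝ) + 1) ≤ (k':ℝ) := by exact_mod_cast hkk'
    have hmid : (f a).im + Real.pi ∈ Icc ((f a).im) ((f b).im) := by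
      constructor
      · linarith [Real.pi_pos]
      · rw [hk, hk']
        have := Real.pi_pos
        nlinarith
    obtain ⟨c, hcs, hc⟩ := hs.intermediate_value ha hb him hmid
    obtain ⟨j, hj, -⟩ := hval c hcs
    have e1 : 2 * Real.pi * (j:ℝ) = 2 * Real.pi * (k:ℝ) + Real.pi := by
      rw [← hj]
      exact hc.trans (by rw [hk])
    have e2 : (2*(j:ℝ)) = 2*(k:ℝ) + 1 := by
      apply mul_left_cancel₀ Real.pi_ne_zero
      ring_nf
      ring_nf at e1
      linarith
    have e3 : (2*j : ℤ) = 2*k + 1 := by exact_mod_cast e2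
    omega
  have him_eq : (f x).im = (f y).im := by
    rcases lt_trichotomy ((f x).im) ((f y).im) with h | h | h
    · exact absurd h (claim x hx y hy)
    · exact h
    · exact absurd h (claim y hy x hx)
  obtain ⟨k, hk, hr⟩ := hval x hx
  obtain ⟨k', hk', hr'⟩ := hval y hy
  exact Complex.ext (by rw [hr, hr']) him_eq

lemma exists_global_log (F : E → ℂ) (hF : Continuous F) (h0 : ∀ x, F x ≠ 0) :
    ∃ h : E → ℂ, Continuous h ∧ ∀ x, Complex.exp (h x) = F x := by
  choose g hgc hge using fun m : ℕ => exists_log_on_closedBall F hF h0 (m : ℝ)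
  set hh : ℕ → E → ℂ := fun m x => g m x - g m 0 + Complex.log (F 0) with hhh
  have h0mem : ∀ m : ℕ, (0:E) ∈ closedBall (0:E) (m:ℝ) := fun m => by simp
  have hhc : ∀ m, ContinuousOn (hh m) (closedBall 0 (m:ℝ)) := fun m =>
    ((hgc m).sub continuousOn_const).add continuousOn_const
  have hhe : ∀ m : ℕ, ∀ x ∈ closedBall (0:E) (m:ℝ), Complex.exp (hh m x) = F x := by
    intro m x hx
    simp only [hhh]
    rw [Complex.exp_add, Complex.exp_sub, hge m x hx, hge m 0 (h0mem m),
      Complex.exp_log (h0 0)]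
    rw [div_mul_cancel₀ _ (h0 0)]
  have hglue : ∀ m m' : ℕ, m ≤ m' → ∀ x ∈ closedBall (0:E) (m:ℝ), hh m' x = hh m x := by
    intro m m' hmm x hx
    have hsub : closedBall (0:E) (m:ℝ) ⊆ closedBall 0 (m':ℝ) :=
      closedBall_subset_closedBall (by exact_mod_cast hmm)
    have hd : ContinuousOn (fun z => hh m' z - hh m z) (closedBall 0 (m:ℝ)) :=
      ((hhc m').mono hsub).sub (hhc m)
    have hv : ∀ z ∈ closedBall (0:E) (m:ℝ), ∃ k : ℤ,
        hh m' z - hh m z = k * (2*Real.pi*Complex.I) := by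
      intro z hz
      have : Complex.exp (hh m' z - hh m z) = 1 := by
        rw [Complex.exp_sub, hhe m' z (hsub hz), hhe m z hz, div_self (h0 z)]
      exact Complex.exp_eq_one_iff.mp this
    have key := eq_of_twoPiZ ((convex_closedBall (0:E) (m:ℝ)).isPreconnected) hd hv hx
      (h0mem m)
    have h00 : hh m' 0 - hh m 0 = 0 := by simp [hhh]
    rw [h00] at key
    linear_combination key
  refine ⟨fun x => hh ⌈‖x‖⌉₊ x, ?_, ?_⟩
  · rw [continuous_iff_continuousAt]
    intro x
    set m : ℕ := ⌈‖x‖⌉₊ + 1 with hm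
    have hxm : ‖x‖ < (m:ℝ) := by
      refine lt_of_le_of_lt (Nat.le_ceil _) ?_
      exact_mod_cast Nat.lt_succ_self _
    have hxball : x ∈ ball (0:E) (m:ℝ) := by rwa [mem_ball_zero_iff]
    have heq : ∀ y ∈ ball (0:E) (m:ℝ), hh ⌈‖y‖⌉₊ y = hh m y := by
      intro y hy
      rw [mem_ball_zero_iff] at hy
      have h1 : ⌈‖y‖⌉₊ ≤ m := Nat.ceil_le.mpr hy.le
      have h2 : y ∈ closedBall (0:E) ((⌈‖y‖⌉₊ : ℕ):ℝ) := by
        rw [mem_closedBall_zero_iff]; exact Nat.le_ceil _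
      exact (hglue _ m h1 y h2).symm
    have hca : ContinuousAt (hh m) x :=
      (hhc m).continuousAt (Filter.mem_of_superset (isOpen_ball.mem_nhds hxball)
        ball_subset_closedBall)
    apply hca.congr
    filter_upwards [isOpen_ball.mem_nhds hxball] with y hy
    exact (heq y hy).symm
  · intro x
    exact hhe _ x (by rw [mem_closedBall_zero_iff]; exact Nat.le_ceil _)

lemma inter_preconnected_of_union_univ {U V : Set E} (hUo : IsOpen U) (hVo : IsOpen V)
    (hU : IsPreconnected U) (hV : IsPreconnected V) (huv : U ∪ V = univ) :
    IsPreconnected (U ∩ V) := by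
  classical
  by_contra hcon
  rw [IsPreconnected] at hcon
  push_neg at hcon
  obtain ⟨O₁, O₂, hO₁, hO₂, hsub, hne₁, hne₂, hemp⟩ := hcon
  set P : Set E := U ∩ V ∩ O₁ with hPdef
  set Q : Set E := U ∩ V ∩ O₂ with hQdef
  have hPo : IsOpen P := (hUo.inter hVo).inter hO₁
  have hQo : IsOpen Q := (hUo.inter hVo).inter hO₂
  have hPQ : P ∪ Q = U ∩ V := by
    apply Set.Subset.antisymm
    · exact Set.union_subset (Set.inter_subset_left) (Set.inter_subset_left)
    · intro z hz
      rcases hsub hz with h1 | h2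
      · exact Or.inl ⟨hz, h1⟩
      · exact Or.inr ⟨hz, h2⟩
  have hPQdisj : P ∩ Q = ∅ := by
    rw [← hemp]
    ext z
    simp only [hPdef, hQdef, mem_inter_iff, mem_empty_iff_false]
    tauto
  have hfrQ : ∀ a ∈ frontier Q, a ∉ P ∪ Q := by
    intro a ha
    have haQ : a ∉ Q := by
      rw [hQo.frontier_eq] at ha
      exact ha.2
    have haP : a ∉ P := by
      intro haP
      have hQP : Q ⊆ Pᶜ := by
        intro z hz hzP
        rw [← hPQdisj] at hemp
        exact (Set.eq_empty_iff_forall_notMem.mp hPQdisj z) ⟨hzP, hz⟩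
      have : closure Q ⊆ Pᶜ := closure_minimal hQP hPo.isClosed_compl
      rw [hQo.frontier_eq] at ha
      exact this ha.1 haP
    simp [haP, haQ]
  have hAB : ∀ a, a ∉ P ∪ Q → a ∈ Vᶜ ∪ Uᶜ := by
    intro a ha
    by_cases hv : a ∈ V
    · by_cases hu : a ∈ U
      · exact absurd (by rw [hPQ]; exact ⟨hu, hv⟩) ha
      · exact Or.inr hu
    · exact Or.inl hv
  have hdisjAB : Disjoint (Vᶜ) (Uᶜ) := by
    rw [Set.disjoint_iff_inter_eq_empty, ← Set.compl_union, union_comm, huv, compl_univ]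
  obtain ⟨f, hf0, hf1, hf01⟩ := exists_continuous_zero_one_of_isClosed
    hVo.isClosed_compl hUo.isClosed_compl hdisjAB
  set F : E → ℂ := fun x => if x ∈ Q then Complex.exp (-((Real.pi * f x : ℝ) : ℂ) * Complex.I)
      else Complex.exp (((Real.pi * f x : ℝ) : ℂ) * Complex.I) with hFdef
  have hinner : Continuous fun x : E => ((Real.pi * f x : ℝ) : ℂ) * Complex.I :=
    (Complex.continuous_ofReal.comp (continuous_const.mul f.continuous)).mul continuous_const
  have hFcont : Continuous F := by
    apply Continuous.if
    · intro a ha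
      have ha' : a ∉ P ∪ Q := hfrQ a (by rwa [show {x | x ∈ Q} = Q from rfl] at ha)
      rcases hAB a ha' with hav | hau
      · simp [hf0 hav]
      · have hfa : f a = 1 := hf1 hau
        rw [hfa]
        have e1 : (-(((Real.pi * 1 : ℝ)) : ℂ) * Complex.I) = -((Real.pi : ℂ) * Complex.I) := by
          push_cast; ring
        have e2 : ((((Real.pi * 1 : ℝ)) : ℂ) * Complex.I) = (Real.pi : ℂ) * Complex.I := by
          push_cast; ring
        rw [e1, e2, Complex.exp_neg, Complex.exp_pi_mul_I]
        norm_num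
    · exact ((Complex.continuous_ofReal.comp
        (continuous_const.mul f.continuous)).neg.mul continuous_const).cexp
    · exact hinner.cexp
  have hF0 : ∀ x, F x ≠ 0 := by
    intro x
    simp only [hFdef]
    split <;> exact Complex.exp_ne_zero _
  obtain ⟨h, hhcont, hhe⟩ := exists_global_log F hFcont hF0
  set φU : E → ℂ := fun x => if x ∈ Q then h x + ((Real.pi * f x : ℝ) : ℂ) * Complex.I
      else h x - ((Real.pi * f x : ℝ) : ℂ) * Complex.I with hφUdef
  set φV : E → ℂ := fun x => if x ∈ Q then
      h x + ((Real.pi * f x : ℝ) : ℂ) * Complex.I - ((2 * Real.pi : ℝ) : ℂ) * Complex.I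
      else h x - ((Real.pi * f x : ℝ) : ℂ) * Complex.I with hφVdef
  have hexpU : ∀ x, Complex.exp (φU x) = 1 := by
    intro x
    simp only [hφUdef]
    by_cases hq : x ∈ Q
    · rw [if_pos hq, Complex.exp_add, hhe]
      simp only [hFdef, if_pos hq]
      rw [← Complex.exp_add]
      ring_nf
      exact Complex.exp_zero
    · rw [if_neg hq, Complex.exp_sub, hhe]
      simp only [hFdef, if_neg hq]
      rw [div_self (Complex.exp_ne_zero _)]
  have hexpV : ∀ x, Complex.exp (φV x) = 1 := by
    intro x
    simp only [hφVdef]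
    by_cases hq : x ∈ Q
    · rw [if_pos hq, Complex.exp_sub]
      have hu := hexpU x
      simp only [hφUdef, if_pos hq] at hu
      rw [hu]
      rw [show (((2 * Real.pi : ℝ)) : ℂ) * Complex.I = 2 * Real.pi * Complex.I by push_cast; ring,
        Complex.exp_two_pi_mul_I]
      norm_num
    · rw [if_neg hq]
      have hu := hexpU x
      simp only [hφUdef, if_neg hq] at hu
      exact hu
  have hvU : ∀ x ∈ U, ∃ k : ℤ, φU x = k * (2 * Real.pi * Complex.I) :=
    fun x _ => Complex.exp_eq_one_iff.mp (hexpU x)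
  have hvV : ∀ x ∈ V, ∃ k : ℤ, φV x = k * (2 * Real.pi * Complex.I) :=
    fun x _ => Complex.exp_eq_one_iff.mp (hexpV x)
  have hφUc : ContinuousOn φU U := by
    apply ContinuousOn.if
    · intro a ha
      obtain ⟨haU, hafr⟩ := ha
      have ha' : a ∉ P ∪ Q := hfrQ a
        (by rw [show {x | x ∈ Q} = Q from rfl] at hafr; exact hafr)
      rcases hAB a ha' with hav | hau
      · simp [hf0 hav]
      · exact absurd haU hau
    · exact (hhcont.add hinner).continuousOn
    · exact (hhcont.sub hinner).continuousOn
  have hφVc : ContinuousOn φV V := by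
    apply ContinuousOn.if
    · intro a ha
      obtain ⟨haV, hafr⟩ := ha
      have ha' : a ∉ P ∪ Q := hfrQ a
        (by rw [show {x | x ∈ Q} = Q from rfl] at hafr; exact hafr)
      rcases hAB a ha' with hav | hau
      · exact absurd haV hav
      · have : f a = 1 := hf1 hau
        rw [this]
        push_cast
        ring
    · exact ((hhcont.add hinner).sub continuous_const).continuousOn
    · exact (hhcont.sub hinner).continuousOn
  obtain ⟨p, hpP⟩ := hne₁
  obtain ⟨q, hqQ⟩ := hne₂
  have hpP' : p ∈ P := ⟨hpP.1, hpP.2⟩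
  have hqQ' : q ∈ Q := ⟨hqQ.1, hqQ.2⟩
  have hpU : p ∈ U := hpP.1.1
  have hpV : p ∈ V := hpP.1.2
  have hqU : q ∈ U := hqQ.1.1
  have hqV : q ∈ V := hqQ.1.2
  have hpnQ : p ∉ Q := by
    intro hc
    exact (Set.eq_empty_iff_forall_notMem.mp hPQdisj p) ⟨hpP', hc⟩
  have heU : φU p = φU q := eq_of_twoPiZ hU hφUc hvU hpU hqU
  have heV : φV p = φV q := eq_of_twoPiZ hV hφVc hvV hpV hqV
  simp only [hφUdef, if_pos hqQ', if_neg hpnQ] at heU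
  simp only [hφVdef, if_pos hqQ', if_neg hpnQ] at heV
  have : ((2 * Real.pi : ℝ) : ℂ) * Complex.I = 0 := by linear_combination heV - heU
  rcases mul_eq_zero.mp this with h1 | h2
  · rw [Complex.ofReal_eq_zero] at h1
    have := Real.pi_pos
    linarith
  · exact Complex.I_ne_zero h2

lemma pair_compl_preconnected {K₁ K₂ : Set E} (h₁ : IsClosed K₁) (h₂ : IsClosed K₂)
    (hd : Disjoint K₁ K₂) (hc₁ : IsPreconnected K₁ᶜ) (hc₂ : IsPreconnected K₂ᶜ) :
    IsPreconnected (K₁ ∪ K₂)ᶜ := by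
  rw [Set.compl_union]
  exact inter_preconnected_of_union_univ h₁.isOpen_compl h₂.isOpen_compl hc₁ hc₂
    (by rw [← Set.compl_inter, Set.disjoint_iff_inter_eq_empty.mp hd, Set.compl_empty])

lemma finset_compl_preconnected : ∀ (𝒮 : Finset (Set E)),
    (∀ s ∈ 𝒮, IsClosed s ∧ IsPreconnected sᶜ) →
    ((𝒮 : Set (Set E)).Pairwise Disjoint) →
    IsPreconnected (⋃₀ (𝒮 : Set (Set E)))ᶜ := by
  classical
  intro 𝒮
  induction 𝒮 using Finset.induction_on with
  | empty =>
    intro _ _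
    simp only [Finset.coe_empty, Set.sUnion_empty, Set.compl_empty]
    exact (convex_univ : Convex ℝ (Set.univ : Set E)).isPreconnected
  | @insert a s ha ih =>
    intro hprops hdisj
    have hsub : (s : Set (Set E)) ⊆ ((insert a s : Finset (Set E)) : Set (Set E)) := by
      intro t ht
      simp only [Finset.coe_insert, Set.mem_insert_iff]
      exact Or.inr ht
    have hihc := ih (fun t ht => hprops t (Finset.mem_insert_of_mem ht))
      (hdisj.mono hsub)
    have haclosed : IsClosed a := (hprops a (Finset.mem_insert_self a s)).1
    have hapc : IsPreconnected aᶜ := (hprops a (Finset.mem_insert_self a s)).2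
    have hsclosed : IsClosed (⋃₀ (s : Set (Set E))) := by
      rw [Set.sUnion_eq_biUnion]
      exact s.finite_toSet.isClosed_biUnion
        (fun t ht => (hprops t (Finset.mem_insert_of_mem ht)).1)
    have hdisj2 : Disjoint a (⋃₀ (s : Set (Set E))) := by
      rw [Set.disjoint_sUnion_right]
      intro t ht
      have hat : a ≠ t := fun hc => ha (hc ▸ ht)
      exact hdisj (by simp) (hsub ht) hat
    have key := pair_compl_preconnected haclosed hsclosed hdisj2 hapc hihc
    rw [Finset.coe_insert, Set.sUnion_insert]
    exact key

theorem connectedness_components_complement (n : ℕ) (hn : 2 ≤ n)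
    (Ω K : Set (Fin n → ℂ)) (hΩ : IsOpen Ω) (hK : IsCompact K) (hKΩ : K ⊆ Ω) :
    IsConnected Kᶜ ↔
      ∀ x ∈ Ω, IsConnected (K ∩ connectedComponentIn Ω x)ᶜ := by
  haveI : Nontrivial (Fin n → ℂ) := ⟨0, fun _ => 1, by
    intro hcon
    have := congr_fun hcon ⟨0, by omega⟩
    simpa using this⟩
  have hcomp_not_subset : ∀ y ∈ Ω, ¬ connectedComponentIn Ω y ⊆ K := by
    intro y hy hsub
    have hyc : y ∈ connectedComponentIn Ω y := mem_connectedComponentIn hy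
    have hconn : IsConnected (connectedComponentIn Ω y) :=
      isConnected_connectedComponentIn_iff.mpr hy
    have hclos : closure (connectedComponentIn Ω y) ⊆ connectedComponentIn Ω y := by
      apply IsPreconnected.subset_connectedComponentIn hconn.isPreconnected.closure
        (subset_closure hyc)
      exact (closure_minimal hsub hK.isClosed).trans hKΩ
    have hclopen : IsClopen (connectedComponentIn Ω y) :=
      ⟨isClosed_of_closure_subset hclos, hΩ.connectedComponentIn⟩
    have huniv := hclopen.eq_univ ⟨y, hyc⟩
    exact hK.ne_univ (Set.univ_subset_iff.mp (huniv ▸ hsub))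
  constructor
  · -- forward
    intro hKc x hx
    set ω := connectedComponentIn Ω x with hω
    obtain ⟨x₀, hx₀⟩ := hKc.nonempty
    set 𝒞 : Set (Set (Fin n → ℂ)) := insert Kᶜ
      ((fun y => Kᶜ ∪ connectedComponentIn Ω y) '' (K \ ω)) with h𝒞
    have hUnion : ⋃₀ 𝒞 = (K ∩ ω)ᶜ := by
      apply Set.Subset.antisymm
      · apply Set.sUnion_subset
        intro t ht
        rcases Set.mem_insert_iff.mp ht with rfl | htt
        · exact fun z hz hc => hz hc.1
        · obtain ⟨y, hy, rfl⟩ := htt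
          intro z hz
          rcases hz with hz | hz
          · exact fun hc => hz hc.1
          · intro hc
            have h1 : ω = connectedComponentIn Ω z := connectedComponentIn_eq hc.2
            have h2 : connectedComponentIn Ω y = connectedComponentIn Ω z :=
              connectedComponentIn_eq hz
            apply hy.2
            rw [h1, ← h2]
            exact mem_connectedComponentIn (hKΩ hy.1)
      · intro z hz
        by_cases hzK : z ∈ K
        · have hzω : z ∉ ω := fun hc => hz ⟨hzK, hc⟩
          exact ⟨Kᶜ ∪ connectedComponentIn Ω z,
            Set.mem_insert_iff.mpr (Or.inr ⟨z, ⟨hzK, hzω⟩, rfl⟩),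
            Or.inr (mem_connectedComponentIn (hKΩ hzK))⟩
        · exact ⟨Kᶜ, Set.mem_insert _ _, hzK⟩
    refine ⟨⟨x₀, fun hc => hx₀ hc.1⟩, ?_⟩
    rw [← hUnion]
    apply isPreconnected_sUnion x₀
    · intro t ht
      rcases Set.mem_insert_iff.mp ht with rfl | htt
      · exact hx₀
      · obtain ⟨y, hy, rfl⟩ := htt
        exact Or.inl hx₀
    · intro t ht
      rcases Set.mem_insert_iff.mp ht with rfl | htt
      · exact hKc.isPreconnected
      · obtain ⟨y, hy, rfl⟩ := htt
        obtain ⟨z, hzcomp, hznK⟩ := Set.not_subset.mp (hcomp_not_subset y (hKΩ hy.1))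
        exact IsPreconnected.union z hznK hzcomp hKc.isPreconnected
          (isConnected_connectedComponentIn_iff.mpr (hKΩ hy.1)).isPreconnected
  · -- reverse
    intro hyp
    refine ⟨Set.nonempty_compl.mpr hK.ne_univ, ?_⟩
    obtain ⟨t, ht⟩ := hK.elim_finite_subcover (fun y : Fin n → ℂ => connectedComponentIn Ω y)
      (fun y => hΩ.connectedComponentIn)
      (fun z hz => Set.mem_iUnion.mpr ⟨z, mem_connectedComponentIn (hKΩ hz)⟩)
    classical
    set 𝒮 : Finset (Set (Fin n → ℂ)) := t.image (fun y => K ∩ connectedComponentIn Ω y) with h𝒮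
    have hKeq : K = ⋃₀ (𝒮 : Set (Set (Fin n → ℂ))) := by
      apply Set.Subset.antisymm
      · intro z hz
        obtain ⟨y, hyt, hycomp⟩ := Set.mem_iUnion₂.mp (ht hz)
        refine ⟨K ∩ connectedComponentIn Ω y, ?_, ⟨hz, hycomp⟩⟩
        simp only [h𝒮, Finset.coe_image, Set.mem_image, Finset.mem_coe]
        exact ⟨y, hyt, rfl⟩
      · apply Set.sUnion_subset
        intro s hs
        simp only [h𝒮, Finset.coe_image, Set.mem_image, Finset.mem_coe] at hs
        obtain ⟨y, hy, rfl⟩ := hs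
        exact Set.inter_subset_left
    have hclosed : ∀ y : Fin n → ℂ, IsClosed (K ∩ connectedComponentIn Ω y) := by
      intro y
      by_cases hy : y ∈ Ω
      · have key : K ∩ connectedComponentIn Ω y = K ∩ closure (connectedComponentIn Ω y) := by
          apply Set.Subset.antisymm (Set.inter_subset_inter_right _ subset_closure)
          rintro z ⟨hzK, hzc⟩
          refine ⟨hzK, ?_⟩
          have hconn := (isConnected_connectedComponentIn_iff.mpr hy).isPreconnected
          have hkey : (connectedComponentIn Ω y ∪ {z}) ⊆ connectedComponentIn Ω y := by
            apply IsPreconnected.subset_connectedComponentIn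
            · exact hconn.subset_closure Set.subset_union_left
                (Set.union_subset subset_closure (Set.singleton_subset_iff.mpr hzc))
            · exact Or.inl (mem_connectedComponentIn hy)
            · exact Set.union_subset (connectedComponentIn_subset Ω y)
                (Set.singleton_subset_iff.mpr (hKΩ hzK))
          exact hkey (Or.inr rfl)
        rw [key]
        exact hK.isClosed.inter isClosed_closure
      · rw [connectedComponentIn_eq_empty hy]
        simp
    have hpc : ∀ y : Fin n → ℂ, IsPreconnected (K ∩ connectedComponentIn Ω y)ᶜ := by
      intro y
      by_cases hy : y ∈ Ω
      · exact (hyp y hy).isPreconnected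
      · rw [connectedComponentIn_eq_empty hy]
        simp only [Set.inter_empty, Set.compl_empty]
        exact (convex_univ : Convex ℝ (Set.univ : Set (Fin n → ℂ))).isPreconnected
    have hdisj : (𝒮 : Set (Set (Fin n → ℂ))).Pairwise Disjoint := by
      intro s hs u hu hne
      simp only [h𝒮, Finset.coe_image, Set.mem_image, Finset.mem_coe] at hs hu
      obtain ⟨y, hy, rfl⟩ := hs
      obtain ⟨z, hz, rfl⟩ := hu
      rw [Set.disjoint_left]
      intro w hws hwu
      apply hne
      have h1 : connectedComponentIn Ω y = connectedComponentIn Ω w :=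
        connectedComponentIn_eq hws.2
      have h2 : connectedComponentIn Ω z = connectedComponentIn Ω w :=
        connectedComponentIn_eq hwu.2
      rw [h1, ← h2]
    have hprops : ∀ s ∈ 𝒮, IsClosed s ∧ IsPreconnected sᶜ := by
      intro s hs
      simp only [h𝒮, Finset.mem_image] at hs
      obtain ⟨y, hy, rfl⟩ := hs
      exact ⟨hclosed y, hpc y⟩
    rw [hKeq]
    exact finset_compl_preconnected 𝒮 hprops hdisj
end

section
/- Let n ≥ 2, let Ω ⊂ ℂⁿ be open, K ⊂ Ω compact with ℂⁿ \ K connected. Then the restriction map ρ : 𝓗(Ω) → 𝓗(Ω \ K), ρ(f) = f|_{Ω \ K}, is range preserving: for every holomorphic f : Ω → ℂ one has f(Ω) = f(Ω \ K). -/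
open Complex Finset

noncomputable def hip {n : ℕ} (a b : Fin n → ℂ) : ℂ := ∑ i, a i * (starRingEnd ℂ) (b i)
noncomputable def sqn {n : ℕ} (a : Fin n → ℂ) : ℝ := ∑ i, Complex.normSq (a i)

lemma sqn_nonneg {n : ℕ} (a : Fin n → ℂ) : 0 ≤ sqn a :=
  Finset.sum_nonneg fun i _ => normSq_nonneg _

lemma sqn_pos {n : ℕ} {a : Fin n → ℂ} (ha : a ≠ 0) : 0 < sqn a := by
  obtain ⟨i, hi⟩ : ∃ i, a i ≠ 0 := by
    by_contra h; push_neg at h; exact ha (funext h)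
  exact Finset.sum_pos' (fun j _ => normSq_nonneg _) ⟨i, Finset.mem_univ i, normSq_pos.2 hi⟩

lemma sqn_smul {n : ℕ} (c : ℂ) (a : Fin n → ℂ) : sqn (c • a) = normSq c * sqn a := by
  simp [sqn, normSq_mul, Finset.mul_sum]

lemma hip_self {n : ℕ} (a : Fin n → ℂ) : hip a a = (sqn a : ℂ) := by
  simp [hip, sqn, Complex.mul_conj]

lemma hip_add_left {n : ℕ} (a b c : Fin n → ℂ) : hip (a + b) c = hip a c + hip b c := by
  simp [hip, add_mul, Finset.sum_add_distrib]

lemma hip_smul_left {n : ℕ} (c : ℂ) (a b : Fin n → ℂ) : hip (c • a) b = c * hip a b := by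
  simp [hip, Finset.mul_sum, mul_assoc]

lemma hip_smul_right {n : ℕ} (c : ℂ) (a b : Fin n → ℂ) :
    hip a (c • b) = (starRingEnd ℂ) c * hip a b := by
  simp only [hip, Pi.smul_apply, smul_eq_mul, map_mul, Finset.mul_sum]
  exact Finset.sum_congr rfl fun i _ => by ring

lemma hip_single_right {n : ℕ} (a : Fin n → ℂ) (j : Fin n) (c : ℂ) :
    hip a (Pi.single j c) = a j * (starRingEnd ℂ) c := by
  rw [hip, Finset.sum_eq_single j]
  · simp
  · intro i _ h; simp [Pi.single_eq_of_ne h]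
  · simp

lemma hip_sub_right {n : ℕ} (a b c : Fin n → ℂ) : hip a (b - c) = hip a b - hip a c := by
  simp [hip, mul_sub, Finset.sum_sub_distrib]

lemma sqn_add {n : ℕ} (a b : Fin n → ℂ) :
    sqn (a + b) = sqn a + 2 * (hip a b).re + sqn b := by
  simp only [sqn, hip, Pi.add_apply, Complex.normSq_add, Complex.re_sum, Finset.sum_add_distrib,
    ← Finset.mul_sum]
  ring

lemma continuous_sqn {n : ℕ} : Continuous (sqn (n := n)) :=
  continuous_finset_sum _ fun i _ => Complex.continuous_normSq.comp (continuous_apply i)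

lemma sqn_key {n : ℕ} {z0 u v : Fin n → ℂ} (hzv : hip z0 v = 0) (huv : hip u v = 0)
    (hzu : hip z0 u = (sqn z0 : ℂ)) (s : ℝ) (t : ℂ) :
    sqn (z0 + (s : ℂ) • u + t • v)
      = sqn z0 + 2 * s * sqn z0 + normSq (s : ℂ) * sqn u + normSq t * sqn v := by
  have h1 : hip (z0 + (s : ℂ) • u) (t • v) = 0 := by
    rw [hip_smul_right, hip_add_left, hip_smul_left, hzv, huv]; ring
  rw [sqn_add (z0 + (s : ℂ) • u) (t • v), h1, sqn_add z0 ((s : ℂ) • u),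
    hip_smul_right, hzu, sqn_smul, sqn_smul]
  have : ((starRingEnd ℂ) (s : ℂ) * (sqn z0 : ℂ)).re = s * sqn z0 := by
    simp
  rw [this, Complex.zero_re]; ring
set_option maxHeartbeats 1600000 in
theorem restriction_range_preserving (n : ℕ) (hn : 2 ≤ n)
    (Ω K : Set (Fin n → ℂ)) (hΩ : IsOpen Ω) (hK : IsCompact K) (hKΩ : K ⊆ Ω)
    (hconn : IsConnected Kᶜ) (f : (Fin n → ℂ) → ℂ) (hf : DifferentiableOn ℂ f Ω) :
    f '' Ω = f '' (Ω \ K) := by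
  refine Set.Subset.antisymm ?_ (Set.image_mono Set.diff_subset)
  rintro c ⟨x, hxΩ, rfl⟩
  by_contra hc
  have hfc : ContinuousOn f Ω := hf.continuousOn
  set Z : Set (Fin n → ℂ) := {z | z ∈ Ω ∧ f z = f x} with hZdef
  have hZK : Z ⊆ K := by
    intro z hz
    by_contra h
    exact hc ⟨z, ⟨hz.1, h⟩, hz.2⟩
  have hZclosed : IsClosed Z := by
    refine isClosed_of_closure_subset fun z hz => ?_
    have hzK : z ∈ K := hK.isClosed.closure_subset ((closure_mono hZK) hz)
    have hzΩ : z ∈ Ω := hKΩ hzK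
    refine ⟨hzΩ, ?_⟩
    have hca : ContinuousAt f z := hfc.continuousAt (hΩ.mem_nhds hzΩ)
    have h1 : f z ∈ closure (f '' Z) := mem_closure_image hca hz
    have h2 : f '' Z ⊆ {f x} := by rintro _ ⟨w, hw, rfl⟩; exact hw.2
    simpa using (closure_minimal h2 isClosed_singleton) h1
  have hZcpt : IsCompact Z := hK.of_isClosed_subset hZclosed hZK
  have hZne : Z.Nonempty := ⟨x, hxΩ, rfl⟩
  obtain ⟨z0, hz0Z, hz0max⟩ := hZcpt.exists_isMaxOn hZne continuous_sqn.continuousOn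
  have hz0Ω : z0 ∈ Ω := hz0Z.1
  -- two special directions u, v
  have h0n : 0 < n := by omega
  have h1n : 1 < n := by omega
  set i0 : Fin n := ⟨0, h0n⟩ with hi0def
  set i1 : Fin n := ⟨1, h1n⟩ with hi1def
  have hi01 : i0 ≠ i1 := by simp [hi0def, hi1def, Fin.ext_iff]
  set v : Fin n → ℂ :=
    if z0 i0 = 0 then Pi.single i0 1
    else Pi.single i0 ((starRingEnd ℂ) (z0 i1)) - Pi.single i1 ((starRingEnd ℂ) (z0 i0))
    with hvdef
  set u : Fin n → ℂ := if z0 = 0 then Pi.single i1 1 else z0 with hudef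
  have hvne : v ≠ 0 := by
    rw [hvdef]
    split_ifs with h
    · intro hcon
      have := congrFun hcon i0
      simp at this
    · intro hcon
      have := congrFun hcon i1
      simp [Pi.single_eq_of_ne hi01.symm, Pi.single_eq_same] at this
      exact h this
  have hune : u ≠ 0 := by
    rw [hudef]
    split_ifs with h
    · intro hcon
      have := congrFun hcon i1
      simp at this
    · exact h
  have hzv : hip z0 v = 0 := by
    rw [hvdef]
    split_ifs with h
    · rw [hip_single_right]; simp [h]
    · rw [hip_sub_right, hip_single_right, hip_single_right]
      simp only [Complex.conj_conj, RingHomCompTriple.comp_apply, RingHom.id_apply]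
      ring
  have huv : hip u v = 0 := by
    rw [hudef]
    split_ifs with h
    · have hz00 : z0 i0 = 0 := by rw [h]; rfl
      rw [hvdef, if_pos hz00, hip_single_right, Pi.single_eq_of_ne hi01]
      ring
    · exact hzv
  have hzu : hip z0 u = (sqn z0 : ℂ) := by
    rw [hudef]
    split_ifs with h
    · rw [h, hip_single_right]
      simp [sqn]
    · exact hip_self z0
  -- key expansion
  have key : ∀ (s : ℝ) (t : ℂ), 0 ≤ s →
      sqn z0 + s ^ 2 * sqn u + Complex.normSq t * sqn v ≤ sqn (z0 + (s : ℂ) • u + t • v) := by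
    intro s t hs
    rw [sqn_key hzv huv hzu s t]
    have : Complex.normSq (s : ℂ) = s ^ 2 := by simp [Complex.normSq_ofReal, sq]
    rw [this]
    nlinarith [sqn_nonneg z0]
  -- a ball around z0 inside Ω
  obtain ⟨ρ, hρ, hball⟩ := Metric.isOpen_iff.1 hΩ z0 hz0Ω
  -- the slice function
  set φ : ℂ → ℂ := fun t => f (z0 + t • v) - f x with hφdef
  have hmem : ∀ t : ℂ, ‖t‖ * ‖v‖ < ρ → z0 + t • v ∈ Metric.ball z0 ρ := by
    intro t ht
    simp only [Metric.mem_ball, dist_eq_norm]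
    calc ‖z0 + t • v - z0‖ = ‖t • v‖ := by ring_nf
    _ = ‖t‖ * ‖v‖ := by rw [norm_smul]
    _ < ρ := ht
  have hvpos : (0:ℝ) < ‖v‖ + 1 := by positivity
  set δ : ℝ := ρ / (‖v‖ + 1) with hδdef
  have hδpos : 0 < δ := by positivity
  have hmapsto : ∀ t : ℂ, ‖t‖ < δ → z0 + t • v ∈ Ω := by
    intro t ht
    refine hball (hmem t ?_)
    have h1 : ‖t‖ * ‖v‖ ≤ ‖t‖ * (‖v‖ + 1) := by nlinarith [norm_nonneg t]
    have h2 : ‖t‖ * (‖v‖ + 1) < δ * (‖v‖ + 1) := by nlinarith [norm_nonneg v]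
    have h3 : δ * (‖v‖ + 1) = ρ := div_mul_cancel₀ ρ hvpos.ne'
    linarith
  have hA : Differentiable ℂ (fun t : ℂ => z0 + t • v) :=
    (differentiable_const z0).add (differentiable_id.smul_const v)
  have hφdiff : DifferentiableOn ℂ φ (Metric.ball 0 δ) := by
    refine DifferentiableOn.sub ?_ (differentiableOn_const _)
    refine hf.comp hA.differentiableOn ?_
    intro t ht
    exact hmapsto t (by simpa [dist_eq_norm] using ht)
  have hφ0 : φ 0 = 0 := by
    simp only [hφdef, zero_smul, add_zero, sub_eq_zero]
    exact hz0Z.2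
  have hφan : AnalyticAt ℂ φ 0 := hφdiff.analyticAt (Metric.ball_mem_nhds 0 hδpos)
  rcases hφan.eventually_eq_zero_or_eventually_ne_zero with hA0 | hB
  -- Case A : φ vanishes identically near 0
  · rw [Metric.eventually_nhds_iff] at hA0
    obtain ⟨ε, hε, hAe⟩ := hA0
    set t : ℂ := ((min ε δ / 2 : ℝ) : ℂ) with htdef
    have hmin : 0 < min ε δ := lt_min hε hδpos
    have htn : ‖t‖ = min ε δ / 2 := by
      rw [htdef, Complex.norm_real, Real.norm_eq_abs, abs_of_pos (by linarith)]
    have htne : t ≠ 0 := by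
      rw [htdef]
      exact_mod_cast (by positivity : (min ε δ / 2 : ℝ) ≠ 0)
    have htε : ‖t‖ < ε := by rw [htn]; have := min_le_left ε δ; linarith
    have htδ : ‖t‖ < δ := by rw [htn]; have := min_le_right ε δ; linarith
    have hp : z0 + t • v ∈ Z := by
      refine ⟨hmapsto t htδ, ?_⟩
      have := hAe (show dist t 0 < ε by simpa [dist_eq_norm] using htε)
      rwa [hφdef, sub_eq_zero] at this
    have h1 : sqn (z0 + t • v) ≤ sqn z0 := hz0max hp
    have h2 := key 0 t le_rfl
    have h3 : z0 + ((0:ℝ) : ℂ) • u + t • v = z0 + t • v := by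
      simp
    rw [h3] at h2
    have h4 : 0 < Complex.normSq t * sqn v :=
      mul_pos (Complex.normSq_pos.2 htne) (sqn_pos hvne)
    nlinarith
  -- Case B : φ has an isolated zero at 0
  · rw [eventually_nhdsWithin_iff, Metric.eventually_nhds_iff] at hB
    obtain ⟨ε, hε, hBe⟩ := hB
    set r : ℝ := min (ε / 2) (ρ / (4 * (‖v‖ + 1))) with hrdef
    have hr : 0 < r := lt_min (by linarith) (by positivity)
    have hrε : r < ε := by
      have := min_le_left (ε / 2) (ρ / (4 * (‖v‖ + 1)))
      have : r ≤ ε / 2 := this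
      linarith
    have hrv : r * ‖v‖ ≤ ρ / 4 := by
      have h1 : r ≤ ρ / (4 * (‖v‖ + 1)) := min_le_right _ _
      have h2 : r * ‖v‖ ≤ (ρ / (4 * (‖v‖ + 1))) * (‖v‖ + 1) := by nlinarith [norm_nonneg v, hr.le]
      have h3 : (ρ / (4 * (‖v‖ + 1))) * (‖v‖ + 1) = ρ / 4 := by
        field_simp
      linarith
    have hφne : ∀ t : ℂ, ‖t‖ ≤ r → t ≠ 0 → φ t ≠ 0 := by
      intro t h1 h2
      exact hBe (show dist t 0 < ε by simpa [dist_eq_norm] using lt_of_le_of_lt h1 hrε)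
        (Set.mem_compl_singleton_iff.2 h2)
    set C : Set (Fin n → ℂ) := Metric.closedBall z0 (ρ / 2) with hCdef
    have hCΩ : C ⊆ Ω := (Metric.closedBall_subset_ball (by linarith)).trans hball
    have hmem1 : ∀ t : ℂ, ‖t‖ ≤ r → z0 + t • v ∈ C := by
      intro t ht
      simp only [hCdef, Metric.mem_closedBall, dist_eq_norm]
      have h1 : z0 + t • v - z0 = t • v := by ring_nf
      rw [h1, norm_smul]
      have : ‖t‖ * ‖v‖ ≤ r * ‖v‖ := by nlinarith [norm_nonneg v]
      linarith
    -- min of ‖φ‖ on the sphere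
    have hsne : (Metric.sphere (0:ℂ) r).Nonempty := NormedSpace.sphere_nonempty.2 hr.le
    have hφcont : ContinuousOn φ (Metric.sphere 0 r) := by
      refine ContinuousOn.sub ?_ continuousOn_const
      refine hfc.comp hA.continuous.continuousOn ?_
      intro t ht
      refine hCΩ (hmem1 t ?_)
      simp only [Metric.mem_sphere, dist_eq_norm, sub_zero] at ht
      simp [ht]
    obtain ⟨ts, hts, htsmin⟩ := (isCompact_sphere (0:ℂ) r).exists_isMinOn hsne hφcont.norm
    set m : ℝ := ‖φ ts‖ with hmdef
    have htsr : ‖ts‖ = r := by simpa [dist_eq_norm] using hts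
    have hm : 0 < m := by
      refine norm_pos_iff.2 (hφne ts htsr.le ?_)
      intro h
      rw [h, norm_zero] at htsr
      exact hr.ne htsr
    -- uniform continuity of f on C
    have hunif := (isCompact_closedBall z0 (ρ / 2)).uniformContinuousOn_of_continuous
      (hfc.mono hCΩ)
    rw [Metric.uniformContinuousOn_iff] at hunif
    obtain ⟨d, hd, hdprop⟩ := hunif (m / 2) (by positivity)
    have hupos : (0:ℝ) < ‖u‖ + 1 := by positivity
    set s : ℝ := min (d / (2 * (‖u‖ + 1))) (ρ / (8 * (‖u‖ + 1))) with hsdef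
    have hs : 0 < s := lt_min (by positivity) (by positivity)
    have hsu1 : s * ‖u‖ < d := by
      have h1 : s ≤ d / (2 * (‖u‖ + 1)) := min_le_left _ _
      have h2 : s * ‖u‖ ≤ (d / (2 * (‖u‖ + 1))) * (‖u‖ + 1) := by
        nlinarith [norm_nonneg u, hs.le]
      have h3 : (d / (2 * (‖u‖ + 1))) * (‖u‖ + 1) = d / 2 := by field_simp
      linarith
    have hsu2 : s * ‖u‖ ≤ ρ / 8 := by
      have h1 : s ≤ ρ / (8 * (‖u‖ + 1)) := min_le_right _ _
      have h2 : s * ‖u‖ ≤ (ρ / (8 * (‖u‖ + 1))) * (‖u‖ + 1) := by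
        nlinarith [norm_nonneg u, hs.le]
      have h3 : (ρ / (8 * (‖u‖ + 1))) * (‖u‖ + 1) = ρ / 8 := by field_simp
      linarith
    have hnorms : ‖((s:ℝ) : ℂ)‖ = s := by
      rw [Complex.norm_real, Real.norm_eq_abs, abs_of_pos hs]
    have hmem2 : ∀ t : ℂ, ‖t‖ ≤ r → z0 + (s : ℂ) • u + t • v ∈ C := by
      intro t ht
      simp only [hCdef, Metric.mem_closedBall, dist_eq_norm]
      have h1 : z0 + (s:ℂ) • u + t • v - z0 = (s:ℂ) • u + t • v := by ring_nf
      rw [h1]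
      have h2 : ‖(s:ℂ) • u + t • v‖ ≤ ‖(s:ℂ) • u‖ + ‖t • v‖ := norm_add_le _ _
      rw [norm_smul, norm_smul, hnorms] at h2
      have h3 : ‖t‖ * ‖v‖ ≤ r * ‖v‖ := by nlinarith [norm_nonneg v]
      linarith
    set ψ : ℂ → ℂ := fun t => f (z0 + (s : ℂ) • u + t • v) - f x with hψdef
    have hclose : ∀ t : ℂ, ‖t‖ ≤ r → dist (ψ t) (φ t) < m / 2 := by
      intro t ht
      have h1 : dist (f (z0 + (s:ℂ) • u + t • v)) (f (z0 + t • v)) < m / 2 := by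
        refine hdprop _ (hmem2 t ht) _ (hmem1 t ht) ?_
        have h2 : z0 + (s:ℂ) • u + t • v - (z0 + t • v) = (s:ℂ) • u := by ring_nf
        rw [dist_eq_norm, h2, norm_smul, hnorms]
        linarith
      simpa [hψdef, hφdef, dist_sub_right] using h1
    -- ψ has a zero in the closed ball
    have hzero : ∃ t1 : ℂ, ‖t1‖ ≤ r ∧ ψ t1 = 0 := by
      by_contra hno
      push_neg at hno
      have hψmaps : ∀ t : ℂ, ‖t‖ ≤ r → z0 + (s:ℂ) • u + t • v ∈ Ω := fun t ht => hCΩ (hmem2 t ht)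
      have hψA : Differentiable ℂ (fun t : ℂ => z0 + (s:ℂ) • u + t • v) :=
        (differentiable_const _).add (differentiable_id.smul_const v)
      have hψdiff : DifferentiableOn ℂ ψ (Metric.ball 0 r) := by
        refine DifferentiableOn.sub ?_ (differentiableOn_const _)
        refine hf.comp hψA.differentiableOn ?_
        intro t ht
        exact hψmaps t (by simpa [dist_eq_norm] using (le_of_lt (by simpa [dist_eq_norm] using ht : ‖t‖ < r)))
      have hψcont : ContinuousOn ψ (Metric.closedBall 0 r) := by
        refine ContinuousOn.sub ?_ continuousOn_const
        refine hfc.comp hψA.continuous.continuousOn ?_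
        intro t ht
        exact hψmaps t (by simpa [dist_eq_norm] using ht)
      have hgd : DiffContOnCl ℂ (fun t => (ψ t)⁻¹) (Metric.ball 0 r) := by
        constructor
        · refine hψdiff.inv ?_
          intro t ht
          exact hno t (le_of_lt (by simpa [dist_eq_norm] using ht))
        · rw [closure_ball 0 hr.ne']
          refine hψcont.inv₀ ?_
          intro t ht
          exact hno t (by simpa [dist_eq_norm] using ht)
      have hbound : ∀ t ∈ frontier (Metric.ball (0:ℂ) r), ‖(ψ t)⁻¹‖ ≤ (m / 2)⁻¹ := by
        rw [frontier_ball 0 hr.ne']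
        intro t ht
        have htr : ‖t‖ = r := by simpa [dist_eq_norm] using ht
        have h1 : m ≤ ‖φ t‖ := htsmin ht
        have h2 : ‖φ t - ψ t‖ < m / 2 := by
          have := hclose t htr.le
          rwa [dist_comm, dist_eq_norm] at this
        have h3 : m / 2 ≤ ‖ψ t‖ := by
          have := norm_sub_norm_le (φ t) (ψ t)
          linarith
        rw [norm_inv]
        exact inv_anti₀ (by positivity) h3
      have h0mem : (0:ℂ) ∈ closure (Metric.ball (0:ℂ) r) := by
        rw [closure_ball 0 hr.ne']
        exact Metric.mem_closedBall_self hr.le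
      have hfin := Complex.norm_le_of_forall_mem_frontier_norm_le Metric.isBounded_ball
        hgd hbound h0mem
      rw [norm_inv] at hfin
      have hψ0 : ‖ψ 0‖ < m / 2 := by
        have := hclose 0 (by simp [hr.le])
        rw [hφ0, dist_eq_norm, sub_zero] at this
        exact this
      have hψ0pos : 0 < ‖ψ 0‖ := norm_pos_iff.2 (hno 0 (by simp [hr.le]))
      have : m / 2 ≤ ‖ψ 0‖ := (inv_le_inv₀ hψ0pos (by positivity)).1 hfin
      linarith
    obtain ⟨t1, ht1r, ht1z⟩ := hzero
    have hpΩ : z0 + (s:ℂ) • u + t1 • v ∈ Ω := hCΩ (hmem2 t1 ht1r)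
    have hpZ : z0 + (s:ℂ) • u + t1 • v ∈ Z := by
      refine ⟨hpΩ, ?_⟩
      rw [hψdef] at ht1z
      exact sub_eq_zero.1 ht1z
    have h1 : sqn (z0 + (s:ℂ) • u + t1 • v) ≤ sqn z0 := hz0max hpZ
    have h2 := key s t1 hs.le
    have h4 : 0 < s ^ 2 * sqn u := mul_pos (pow_pos hs 2) (sqn_pos hune)
    nlinarith [Complex.normSq_nonneg t1, sqn_nonneg v, mul_nonneg (Complex.normSq_nonneg t1) (sqn_nonneg v)]
end

section
/- Let n ≥ 2, let Ω ⊂ ℂⁿ be open and K ⊂ Ω compact with Ω \ K connected. Then for every holomorphic f : Ω → ℂ, f(Ω) = f(Ω \ K). (Compact excision: removing a compact set from the domain does not change the range.) -/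
open Metric Set Filter Topology

theorem compact_excision (n : ℕ) (hn : 2 ≤ n)
    (Ω K : Set (Fin n → ℂ)) (hΩ : IsOpen Ω) (hK : IsCompact K) (hKΩ : K ⊆ Ω)
    (hconn : IsConnected (Ω \ K)) (f : (Fin n → ℂ) → ℂ) (hf : DifferentiableOn ℂ f Ω) :
    f '' Ω = f '' (Ω \ K) := by
  apply Set.Subset.antisymm _ (Set.image_mono (f := f) Set.diff_subset)
  rintro w ⟨a, haΩ, rfl⟩
  by_contra hw
  set w := f a with hw'
  have hne : ∀ x ∈ Ω \ K, f x ≠ w := fun x hx h => hw ⟨x, hx, h⟩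
  have hfc : ContinuousOn f Ω := hf.continuousOn
  set Z : Set (Fin n → ℂ) := {x | x ∈ Ω ∧ f x = w} with hZdef
  have hZK : Z ⊆ K := by
    intro x hx
    by_contra hxK
    exact hne x ⟨hx.1, hxK⟩ hx.2
  -- Z is compact
  have hZclosed : IsClosed Z := by
    rw [← closure_subset_iff_isClosed]
    intro x hx
    have hxK : x ∈ K := by
      have h1 : closure Z ⊆ closure K := closure_mono hZK
      rw [hK.isClosed.closure_eq] at h1
      exact h1 hx
    have hxΩ : x ∈ Ω := hKΩ hxK
    have hfx : ContinuousAt f x := hfc.continuousAt (hΩ.mem_nhds hxΩ)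
    refine ⟨hxΩ, ?_⟩
    haveI : (nhdsWithin x Z).NeBot := mem_closure_iff_nhdsWithin_neBot.1 hx
    have h2 : Filter.Tendsto f (nhdsWithin x Z) (nhds (f x)) :=
      hfx.tendsto.mono_left nhdsWithin_le_nhds
    have h3 : Filter.Tendsto f (nhdsWithin x Z) (nhds w) := by
      apply Filter.Tendsto.congr' _ tendsto_const_nhds
      filter_upwards [self_mem_nhdsWithin] with y hy using hy.2.symm
    exact tendsto_nhds_unique h2 h3
  have hZcpt : IsCompact Z := hK.of_isClosed_subset hZclosed hZK
  have hZne : Z.Nonempty := ⟨a, haΩ, rfl⟩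
  -- coordinates
  have h01 : (0 : ℕ) < n := by omega
  have h11 : (1 : ℕ) < n := by omega
  set i0 : Fin n := ⟨0, h01⟩
  set i1 : Fin n := ⟨1, h11⟩
  have hi01 : i1 ≠ i0 := by simp [i0, i1, Fin.ext_iff]
  set e0 : Fin n → ℂ := Pi.single i0 1 with he0
  set e1 : Fin n → ℂ := Pi.single i1 1 with he1
  -- maximizing point
  obtain ⟨p, hpZ, hpmax⟩ := hZcpt.exists_isMaxOn hZne
    (Continuous.continuousOn (by continuity : Continuous fun x : Fin n → ℂ => (x i0).re))
  rw [isMaxOn_iff] at hpmax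
  set c : ℝ := (p i0).re with hc
  -- the affine plane map
  set Q : ℂ → ℂ → (Fin n → ℂ) := fun s t => p + s • e0 + t • e1 with hQdef
  have hQ00 : Q 0 0 = p := by simp [Q]
  have he1i0 : e1 i0 = 0 := Pi.single_eq_of_ne hi01.symm 1
  have he0i1 : e0 i1 = 0 := Pi.single_eq_of_ne hi01 1
  have he0i0 : e0 i0 = 1 := Pi.single_eq_same i0 1
  have he1i1 : e1 i1 = 1 := Pi.single_eq_same i1 1
  have hQi0 : ∀ s t, Q s t i0 = p i0 + s := by
    intro s t
    simp [Q, he0i0, he1i0]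
  have hQi1 : ∀ s t, Q s t i1 = p i1 + t := by
    intro s t
    simp [Q, he0i1, he1i1]
  have hQcont : Continuous fun x : ℂ × ℂ => Q x.1 x.2 := by
    apply Continuous.add
    · exact continuous_const.add ((continuous_fst).smul continuous_const)
    · exact (continuous_snd).smul continuous_const
  have hQdiff : ∀ s, Differentiable ℂ fun t => Q s t := by
    intro s
    exact (differentiable_const _).add (differentiable_id.smul_const e1)
  -- the one-variable slice through p
  set φ : ℂ → ℂ := fun t => f (Q 0 t) - w with hφdef
  set V : Set ℂ := {t | Q 0 t ∈ Ω} with hVdef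
  have hVopen : IsOpen V := hΩ.preimage (hQdiff 0).continuous
  have h0V : (0 : ℂ) ∈ V := by simpa [V, hQ00] using hpZ.1
  have hφdiff : DifferentiableOn ℂ φ V := by
    apply DifferentiableOn.sub_const
    exact hf.comp ((hQdiff 0).differentiableOn) (fun t ht => ht)
  have hφ0 : φ 0 = 0 := by simp [φ, hQ00, hpZ.2]
  have hφan : AnalyticAt ℂ φ 0 := hφdiff.analyticAt (hVopen.mem_nhds h0V)
  rcases hφan.eventually_eq_zero_or_eventually_ne_zero with hB | hA
  · -- Case B: φ vanishes near 0; propagate along the component and exit K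
    set U : Set ℂ := connectedComponentIn V 0 with hUdef
    have hUopen : IsOpen U := hVopen.connectedComponentIn
    have h0U : (0 : ℂ) ∈ U := mem_connectedComponentIn h0V
    have hUV : U ⊆ V := connectedComponentIn_subset V 0
    have hUzero : Set.EqOn φ 0 U :=
      (hφdiff.mono hUV).analyticOnNhd hUopen
        |>.eqOn_zero_of_preconnected_of_eventuallyEq_zero
          isPreconnected_connectedComponentIn h0U hB
    have hUK : ¬ (U ⊆ {t | Q 0 t ∈ K}) := by
      intro hsub
      set K' : Set ℂ := {t | Q 0 t ∈ K} with hK'def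
      have hK'closed : IsClosed K' := hK.isClosed.preimage (hQdiff 0).continuous
      have hK'bdd : Bornology.IsBounded K' := by
        obtain ⟨C, hC⟩ := hK.isBounded.exists_norm_le
        apply isBounded_iff_forall_norm_le.2 ⟨C + ‖p‖, ?_⟩
        intro t ht
        have h1 : ‖Q 0 t i1‖ ≤ C := le_trans (norm_le_pi_norm _ i1) (hC _ ht)
        have : t = Q 0 t i1 - p i1 := by rw [hQi1]; ring
        rw [this]
        calc ‖Q 0 t i1 - p i1‖ ≤ ‖Q 0 t i1‖ + ‖p i1‖ := norm_sub_le _ _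
          _ ≤ C + ‖p‖ := add_le_add h1 (norm_le_pi_norm _ i1)
      have hK'V : K' ⊆ V := fun t ht => hKΩ ht
      have hUclosed : IsClosed U := by
        rw [← closure_subset_iff_isClosed]
        have hclconn : IsPreconnected (closure U) :=
          isPreconnected_connectedComponentIn.closure
        exact hclconn.subset_connectedComponentIn (subset_closure h0U)
          ((closure_minimal hsub hK'closed).trans hK'V)
      have hUuniv : U = Set.univ := IsClopen.eq_univ ⟨hUclosed, hUopen⟩ ⟨0, h0U⟩
      have : IsCompact (Set.univ : Set ℂ) := by
        apply Metric.isCompact_of_isClosed_isBounded isClosed_univ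
        rw [← hUuniv] at *
        exact hK'bdd.subset hsub
      exact noncompact_univ ℂ this
    rw [Set.not_subset] at hUK
    obtain ⟨t, htU, htK⟩ := hUK
    have hfw : f (Q 0 t) = w := by
      have := hUzero htU
      simpa [φ, sub_eq_zero] using this
    exact hne (Q 0 t) ⟨hUV htU, htK⟩ hfw
  · -- Case A: isolated zero at 0 along the line
    rw [eventually_nhdsWithin_iff, Metric.eventually_nhds_iff] at hA
    obtain ⟨ε, hεpos, hε⟩ := hA
    obtain ⟨ε₂, hε₂pos, hε₂⟩ := Metric.isOpen_iff.1 hVopen 0 h0V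
    set r : ℝ := min ε ε₂ / 2 with hrdef
    have hrpos : 0 < r := by positivity
    have hminpos : 0 < min ε ε₂ := lt_min hεpos hε₂pos
    have hrε : r < ε := by
      have := min_le_left ε ε₂; rw [hrdef]; linarith
    have hrε₂ : r < ε₂ := by
      have := min_le_right ε ε₂; rw [hrdef]; linarith
    -- properties of r
    have hrΩ : ∀ t : ℂ, ‖t‖ ≤ r → Q 0 t ∈ Ω := by
      intro t ht
      apply hε₂
      simp only [mem_ball, dist_zero_right]
      linarith
    have hrsphere : ∀ t : ℂ, ‖t‖ = r → f (Q 0 t) ≠ w := by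
      intro t ht
      have h1 : t ≠ 0 := by
        intro h; rw [h] at ht; simp at ht; linarith
      have h2 : dist t 0 < ε := by rw [dist_zero_right, ht]; linarith
      have := hε h2 h1
      rw [hφdef] at this
      exact sub_ne_zero.1 this
    -- choose ρ by compactness
    set P : ℂ × ℂ → (Fin n → ℂ) := fun x => Q x.1 x.2 with hPdef
    set O₁ : Set (ℂ × ℂ) := P ⁻¹' Ω with hO₁def
    have hO₁open : IsOpen O₁ := hΩ.preimage hQcont
    have hfPcont : ContinuousOn (fun x => f (P x)) O₁ :=
      hfc.comp hQcont.continuousOn (fun x hx => hx)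
    set O₂ : Set (ℂ × ℂ) := O₁ ∩ (fun x => f (P x)) ⁻¹' {w}ᶜ with hO₂def
    have hO₂open : IsOpen O₂ :=
      hfPcont.isOpen_inter_preimage hO₁open (isOpen_compl_singleton)
    set C₁ : Set (ℂ × ℂ) := {(0 : ℂ)} ×ˢ closedBall (0 : ℂ) r with hC₁def
    set C₂ : Set (ℂ × ℂ) := {(0 : ℂ)} ×ˢ sphere (0 : ℂ) r with hC₂def
    have hC₁cpt : IsCompact C₁ := isCompact_singleton.prod (isCompact_closedBall _ _)
    have hC₂cpt : IsCompact C₂ := isCompact_singleton.prod (isCompact_sphere _ _)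
    have hC₁O₁ : C₁ ⊆ O₁ := by
      rintro ⟨s, t⟩ ⟨hs, ht⟩
      simp only [mem_singleton_iff] at hs
      simp only [mem_closedBall, dist_zero_right] at ht
      subst hs
      exact hrΩ t ht
    have hC₂O₂ : C₂ ⊆ O₂ := by
      rintro ⟨s, t⟩ ⟨hs, ht⟩
      simp only [mem_singleton_iff] at hs
      simp only [mem_sphere_iff_norm, sub_zero] at ht
      subst hs
      exact ⟨hrΩ t ht.le, hrsphere t ht⟩
    obtain ⟨δ₁, hδ₁pos, hδ₁⟩ := hC₁cpt.exists_thickening_subset_open hO₁open hC₁O₁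
    obtain ⟨δ₂, hδ₂pos, hδ₂⟩ := hC₂cpt.exists_thickening_subset_open hO₂open hC₂O₂
    set ρ : ℝ := min δ₁ δ₂ / 2 with hρdef
    have hρpos : 0 < ρ := by positivity
    have hρδ₁ : ρ < δ₁ := by
      have := min_le_left δ₁ δ₂
      have : 0 < min δ₁ δ₂ := lt_min hδ₁pos hδ₂pos
      have := min_le_left δ₁ δ₂
      rw [hρdef]; linarith
    have hρδ₂ : ρ < δ₂ := by
      have : 0 < min δ₁ δ₂ := lt_min hδ₁pos hδ₂pos
      have := min_le_right δ₁ δ₂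
      rw [hρdef]; linarith
    have hmem : ∀ s t : ℂ, ‖s‖ ≤ ρ → ‖t‖ ≤ r → Q s t ∈ Ω := by
      intro s t hs ht
      have : (s, t) ∈ Metric.thickening δ₁ C₁ := by
        rw [Metric.mem_thickening_iff]
        refine ⟨(0, t), ⟨rfl, by simpa [dist_zero_right] using ht⟩, ?_⟩
        rw [Prod.dist_eq]
        simp only [dist_self, dist_zero_right]
        calc max ‖s‖ 0 = ‖s‖ := max_eq_left (norm_nonneg s)
          _ ≤ ρ := hs
          _ < δ₁ := hρδ₁
      exact hδ₁ this
    have hring : ∀ s t : ℂ, ‖s‖ ≤ ρ → ‖t‖ = r → f (Q s t) ≠ w := by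
      intro s t hs ht
      have : (s, t) ∈ Metric.thickening δ₂ C₂ := by
        rw [Metric.mem_thickening_iff]
        refine ⟨(0, t), ⟨rfl, by simpa [mem_sphere_iff_norm] using ht⟩, ?_⟩
        rw [Prod.dist_eq]
        simp only [dist_self, dist_zero_right]
        calc max ‖s‖ 0 = ‖s‖ := max_eq_left (norm_nonneg s)
          _ ≤ ρ := hs
          _ < δ₂ := hρδ₂
      exact (hδ₂ this).2
    -- minimum of ‖f ∘ Q - w‖ on the ring
    set Ring : Set (ℂ × ℂ) := closedBall (0 : ℂ) ρ ×ˢ sphere (0 : ℂ) r with hRingdef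
    have hRingcpt : IsCompact Ring := (isCompact_closedBall _ _).prod (isCompact_sphere _ _)
    have hRingne : Ring.Nonempty := by
      refine ⟨(0, r), ?_, ?_⟩
      · simp [hρpos.le]
      · simp [mem_sphere_iff_norm, abs_of_nonneg hrpos.le, Complex.norm_real,
          Real.norm_eq_abs]
    have hRingO₁ : Ring ⊆ O₁ := by
      rintro ⟨s, t⟩ ⟨hs, ht⟩
      simp only [mem_closedBall, dist_zero_right] at hs
      simp only [mem_sphere_iff_norm, sub_zero] at ht
      exact hmem s t hs ht.le
    obtain ⟨x₀, hx₀, hminOn⟩ := hRingcpt.exists_isMinOn hRingne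
      ((hfPcont.sub continuousOn_const).norm.mono hRingO₁)
    rw [isMinOn_iff] at hminOn
    set m : ℝ := ‖f (P x₀) - w‖ with hmdef
    have hmpos : 0 < m := by
      rw [hmdef, norm_pos_iff, sub_ne_zero]
      have hs := hx₀.1; have ht := hx₀.2
      simp only [mem_closedBall, dist_zero_right] at hs
      simp only [mem_sphere_iff_norm, sub_zero] at ht
      exact hring x₀.1 x₀.2 hs ht
    -- pick a small real s > 0 with ‖f (Q s 0) - w‖ < m
    have hcont0 : ContinuousAt (fun s : ℂ => f (Q s 0)) 0 := by
      apply ContinuousAt.comp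
      · have : Q 0 0 ∈ Ω := by rw [hQ00]; exact hpZ.1
        exact hfc.continuousAt (hΩ.mem_nhds this)
      · exact (hQcont.comp (continuous_id.prodMk continuous_const)).continuousAt
    have hval0 : f (Q 0 0) = w := by rw [hQ00]; exact hpZ.2
    obtain ⟨δ₃, hδ₃pos, hδ₃⟩ := Metric.continuousAt_iff.1 hcont0 m hmpos
    set sr : ℝ := min ρ δ₃ / 2 with hsrdef
    have hsrpos : 0 < sr := by positivity
    set s : ℂ := (sr : ℂ) with hsdef
    have hsnorm : ‖s‖ = sr := by
      rw [hsdef, Complex.norm_real, Real.norm_eq_abs, abs_of_pos hsrpos]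
    have hsρ : ‖s‖ ≤ ρ := by
      rw [hsnorm, hsrdef]
      have := min_le_left ρ δ₃
      linarith
    have hsδ₃ : dist s 0 < δ₃ := by
      rw [dist_zero_right, hsnorm, hsrdef]
      have := min_le_right ρ δ₃
      have : 0 < min ρ δ₃ := lt_min hρpos hδ₃pos
      have := min_le_right ρ δ₃
      linarith
    have hsmall : ‖f (Q s 0) - w‖ < m := by
      have := hδ₃ hsδ₃
      rwa [hval0, dist_eq_norm] at this
    have hsre : 0 < s.re := by rw [hsdef]; simpa using hsrpos
    -- the slice at s is zero-free on the closed disc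
    have hslice : ∀ t : ℂ, ‖t‖ ≤ r → f (Q s t) ≠ w := by
      intro t ht heq
      have hQst : Q s t ∈ Ω := hmem s t hsρ ht
      have hQZ : Q s t ∈ Z := ⟨hQst, heq⟩
      have := hpmax _ hQZ
      rw [hQi0] at this
      simp only [Complex.add_re] at this
      rw [← hc] at this
      linarith
    -- minimum modulus principle on the disc
    set h : ℂ → ℂ := fun t => (f (Q s t) - w)⁻¹ with hhdef
    set O₃ : Set ℂ := {t | Q s t ∈ Ω} ∩ (fun t => f (Q s t)) ⁻¹' {w}ᶜ with hO₃def
    have hVsopen : IsOpen {t | Q s t ∈ Ω} := hΩ.preimage (hQdiff s).continuous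
    have hO₃open : IsOpen O₃ := by
      apply ContinuousOn.isOpen_inter_preimage _ hVsopen isOpen_compl_singleton
      exact hfc.comp (hQdiff s).continuous.continuousOn (fun t ht => ht)
    have hballO₃ : closedBall (0 : ℂ) r ⊆ O₃ := by
      intro t ht
      simp only [mem_closedBall, dist_zero_right] at ht
      exact ⟨hmem s t hsρ ht, hslice t ht⟩
    have hhdiff : DifferentiableOn ℂ h O₃ := by
      apply DifferentiableOn.inv
      · exact ((hf.comp (hQdiff s).differentiableOn (fun t ht => ht.1)).sub_const w)
      · intro t ht
        exact sub_ne_zero.2 ht.2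
    have hhcl : DiffContOnCl ℂ h (ball (0 : ℂ) r) := by
      apply DifferentiableOn.diffContOnCl
      apply hhdiff.mono
      rw [closure_ball 0 hrpos.ne']
      exact hballO₃
    have hbound : ‖h 0‖ ≤ m⁻¹ := by
      apply Complex.norm_le_of_forall_mem_frontier_norm_le isBounded_ball hhcl
      · intro z hz
        rw [frontier_ball 0 hrpos.ne'] at hz
        simp only [mem_sphere_iff_norm, sub_zero] at hz
        have hzring : (s, z) ∈ Ring := by
          constructor
          · simpa [mem_closedBall, dist_zero_right] using hsρ
          · simpa [mem_sphere_iff_norm] using hz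
        have hge : m ≤ ‖f (Q s z) - w‖ := hminOn (s, z) hzring
        rw [hhdef]
        simp only [norm_inv]
        exact inv_anti₀ hmpos hge
      · rw [closure_ball 0 hrpos.ne']
        simp [hrpos.le]
    have hfinal : m ≤ ‖f (Q s 0) - w‖ := by
      have hne0 : f (Q s 0) - w ≠ 0 := sub_ne_zero.2 (hslice 0 (by simp [hrpos.le]))
      have hpos : 0 < ‖f (Q s 0) - w‖ := norm_pos_iff.2 hne0
      rw [hhdef] at hbound
      simp only [norm_inv] at hbound
      rwa [inv_le_inv₀ hpos hmpos] at hbound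
    linarith
end

section
/- Let n ≥ 2, let Ω ⊂ ℂⁿ be open and connected, f : Ω → ℂ holomorphic, and S ⊂ ℂ. Then the level set f⁻¹(S) is never a nonempty compact subset whose removal leaves Ω \ f⁻¹(S) connected; more precisely, if K ⊂ Ω is compact with f⁻¹(S) ⊆ K and Ω \ K connected, then f⁻¹(S) = ∅. -/
open Set Metric Function

/-- The update map `w ↦ Function.update a i w` is differentiable. -/
lemma differentiable_update {n : ℕ} (a : Fin n → ℂ) (i : Fin n) :
    Differentiable ℂ (fun w : ℂ => Function.update a i w) := by
  rw [differentiable_pi]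
  intro j
  by_cases h : j = i
  · subst h
    simp only [Function.update_self]
    exact differentiable_id (𝕜 := ℂ) (E := ℂ)
  · simpa [Function.update_apply, h] using differentiable_const (a j)

theorem level_set_not_compactly_isolated (n : ℕ) (hn : 2 ≤ n)
    (Ω : Set (Fin n → ℂ)) (hΩ : IsOpen Ω) (hΩc : IsConnected Ω)
    (f : (Fin n → ℂ) → ℂ) (hf : DifferentiableOn ℂ f Ω) (S : Set ℂ)
    (K : Set (Fin n → ℂ)) (hK : IsCompact K) (hKΩ : K ⊆ Ω)
    (hlev : Ω ∩ f ⁻¹' S ⊆ K) (hconn : IsConnected (Ω \ K)) :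
    Ω ∩ f ⁻¹' S = ∅ := by
  by_contra hne
  obtain ⟨x, hxΩ, hxS⟩ := Set.nonempty_iff_ne_empty.2 hne
  set s : ℂ := f x with hs
  -- the level set of the single value `s`
  set L : Set (Fin n → ℂ) := K ∩ f ⁻¹' {s} with hLdef
  have hLmem : ∀ z, z ∈ Ω → f z = s → z ∈ L := by
    intro z hzΩ hzs
    exact ⟨hlev ⟨hzΩ, by simpa [Set.mem_preimage, hzs] using hxS⟩, by simpa using hzs⟩
  have hLΩ : L ⊆ Ω := fun z hz => hKΩ hz.1
  have hLclosed : IsClosed L :=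
    (hf.continuousOn.mono hKΩ).preimage_isClosed_of_isClosed hK.isClosed isClosed_singleton
  have hLcomp : IsCompact L := hK.of_isClosed_subset hLclosed Set.inter_subset_left
  have hLne : L.Nonempty := ⟨x, hLmem x hxΩ rfl⟩
  -- two distinct coordinates
  set i0 : Fin n := ⟨0, by omega⟩ with hi0
  set i1 : Fin n := ⟨1, by omega⟩ with hi1
  have hi01 : i1 ≠ i0 := by simp [hi0, hi1, Fin.ext_iff]
  -- pick `a ∈ L` maximizing the real part of coordinate `i1`
  obtain ⟨a, haL, hmax⟩ := hLcomp.exists_isMaxOn hLne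
    ((Complex.continuous_re.comp (continuous_apply i1)).continuousOn :
      ContinuousOn (fun z : Fin n → ℂ => (z i1).re) L)
  have haΩ : a ∈ Ω := hLΩ haL
  have hfa : f a = s := by simpa using haL.2
  -- the slice through `a` in direction `i0`
  set φ : ℂ → (Fin n → ℂ) := fun w => Function.update a i0 w with hφdef
  have hφcont : Continuous φ := continuous_const.update i0 continuous_id
  have hφdiff : Differentiable ℂ φ := differentiable_update a i0
  set U : Set ℂ := φ ⁻¹' Ω with hUdef
  have hUopen : IsOpen U := hΩ.preimage hφcont
  set g : ℂ → ℂ := fun w => f (φ w) with hgdef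
  have hgdiff : DifferentiableOn ℂ g U :=
    hf.comp hφdiff.differentiableOn (fun w hw => hw)
  have hganal : ∀ b ∈ U, AnalyticAt ℂ (fun w => g w - s) b := fun b hb =>
    ((hgdiff.sub (differentiableOn_const s)).analyticAt (hUopen.mem_nhds hb))
  -- the slice of L
  set Ls : Set ℂ := φ ⁻¹' L with hLsdef
  have hLsclosed : IsClosed Ls := hLclosed.preimage hφcont
  have hLsU : Ls ⊆ U := fun w hw => hLΩ hw
  have hLsg : ∀ w ∈ Ls, g w = s := fun w hw => by simpa using hw.2
  obtain ⟨R, hR⟩ := hLcomp.isBounded.exists_norm_le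
  have hLsbdd : ∀ w ∈ Ls, ‖w‖ ≤ R := by
    intro w hw
    have h1 : ‖φ w i0‖ ≤ ‖φ w‖ := norm_le_pi_norm (φ w) i0
    have h2 : φ w i0 = w := Function.update_self i0 w a
    rw [h2] at h1
    exact h1.trans (hR _ hw)
  -- a point near which `g = s` lies in the interior of `Ls`
  have hnbhd : ∀ b : ℂ, b ∈ U → (∀ᶠ w in nhds b, g w - s = 0) → b ∈ interior Ls := by
    intro b hbU hev
    have : ∀ᶠ w in nhds b, w ∈ Ls := by
      filter_upwards [hev, hUopen.mem_nhds hbU] with w hw hwU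
      exact Set.mem_preimage.2 (hLmem (φ w) hwU (sub_eq_zero.mp hw))
    exact mem_interior_iff_mem_nhds.2 this
  -- Step A : the interior of the slice of L is empty
  have hWempty : interior Ls = ∅ := by
    by_contra hW
    set W : Set ℂ := interior Ls with hWdef
    have hWopen : IsOpen W := isOpen_interior
    have hWne : W.Nonempty := Set.nonempty_iff_ne_empty.2 hW
    have hWbdd : ∀ w ∈ W, ‖w‖ ≤ R := fun w hw => hLsbdd w (interior_subset hw)
    have hfr : (frontier W).Nonempty := by
      by_contra hfe
      have hclopen : IsClopen W := isClopen_iff_frontier_eq_empty.2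
        (Set.not_nonempty_iff_eq_empty.1 hfe)
      rcases isClopen_iff.1 hclopen with h | h
      · exact hW h
      · have h1 : ‖(R + 1 : ℂ)‖ ≤ R := hWbdd _ (h ▸ Set.mem_univ _)
        have h2 : ‖(R + 1 : ℂ)‖ = |R + 1| := by
          rw [show ((R : ℂ) + 1) = ((R + 1 : ℝ) : ℂ) by push_cast; ring]
          exact Complex.norm_real _
        rw [h2] at h1
        cases abs_cases (R + 1) with
        | inl h => linarith [h.1]
        | inr h => linarith [h.1]
    obtain ⟨b, hb⟩ := hfr
    have hbW : b ∉ W := fun h => by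
      rw [frontier, hWopen.interior_eq] at hb
      exact hb.2 h
    have hbLs : b ∈ Ls := by
      have : b ∈ closure Ls := closure_mono interior_subset (frontier_subset_closure hb)
      rwa [hLsclosed.closure_eq] at this
    have hbU : b ∈ U := hLsU hbLs
    -- dichotomy at b
    rcases (hganal b hbU).eventually_eq_zero_or_eventually_ne_zero with hcase | hcase
    · exact hbW (hnbhd b hbU hcase)
    · -- but points of W accumulate at b and g = s on W
      have hfreq : ∃ᶠ w in nhds b, w ∈ W := by
        rw [frontier] at hb
        exact mem_closure_iff_frequently.1 hb.1
      have hfreq' : ∃ᶠ w in nhdsWithin b {b}ᶜ, w ∈ W := by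
        rw [frequently_nhdsWithin_iff]
        apply hfreq.mono
        intro w hw
        exact ⟨hw, fun h => hbW (h ▸ hw)⟩
      obtain ⟨w, hwne, hwW⟩ := (hfreq'.and_eventually hcase).exists
      exact hwW (sub_eq_zero.mpr (hLsg w (interior_subset hwne)))
  -- Step B : an isolated zero at a0
  set a0 : ℂ := a i0 with ha0
  have hφa0 : φ a0 = a := Function.update_eq_self i0 a
  have ha0Ls : a0 ∈ Ls := by
    simp only [hLsdef, Set.mem_preimage, hφa0]
    exact haL
  have ha0U : a0 ∈ U := hLsU ha0Ls
  have hga0 : g a0 = s := by simp only [hgdef, hφa0, hfa]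
  have hiso : ∀ᶠ w in nhdsWithin a0 {a0}ᶜ, g w - s ≠ 0 := by
    rcases (hganal a0 ha0U).eventually_eq_zero_or_eventually_ne_zero with hcase | hcase
    · exfalso
      have := hnbhd a0 ha0U hcase
      rw [hWempty] at this
      exact this
    · exact hcase
  -- extract a radius r with closedBall ⊆ U and g ≠ s on the sphere
  obtain ⟨r, hrpos, hrU, hrsph⟩ :
      ∃ r : ℝ, 0 < r ∧ closedBall a0 r ⊆ U ∧ ∀ w ∈ sphere a0 r, g w ≠ s := by
    rw [eventually_nhdsWithin_iff] at hiso
    obtain ⟨r1, hr1pos, hr1⟩ := Metric.eventually_nhds_iff_ball.1 hiso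
    obtain ⟨r2, hr2pos, hr2⟩ := Metric.isOpen_iff.1 hUopen a0 ha0U
    refine ⟨min r1 r2 / 2, by positivity, ?_, ?_⟩
    · intro w hw
      apply hr2
      rw [mem_closedBall] at hw
      rw [mem_ball]
      calc dist w a0 ≤ min r1 r2 / 2 := hw
        _ < r2 := by
          have := min_le_right r1 r2
          linarith [lt_min_iff.1 (by positivity : (0:ℝ) < min r1 r2)]
    · intro w hw hgw
      have hd : dist w a0 = min r1 r2 / 2 := mem_sphere.1 hw
      have hwb : w ∈ ball a0 r1 := by
        rw [mem_ball, hd]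
        have := min_le_left r1 r2
        linarith [lt_min_iff.1 (by positivity : (0:ℝ) < min r1 r2)]
      have hwne : w ≠ a0 := by
        intro h
        rw [h, dist_self] at hd
        have : (0:ℝ) < min r1 r2 / 2 := by positivity
        linarith
      exact hr1 w hwb (Set.mem_compl_singleton_iff.2 hwne) (sub_eq_zero.mpr hgw)
  -- minimum of |g - s| on the sphere
  have hsphne : (sphere a0 r).Nonempty := NormedSpace.sphere_nonempty.2 hrpos.le
  have hgcont : ContinuousOn g U := hgdiff.continuousOn
  obtain ⟨w0, hw0, hw0min⟩ := (isCompact_sphere a0 r).exists_isMinOn hsphne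
    ((continuous_norm.comp_continuousOn ((hgcont.mono
      (fun w hw => hrU (sphere_subset_closedBall hw))).sub continuousOn_const)) :
      ContinuousOn (fun w => ‖g w - s‖) (sphere a0 r))
  set ε : ℝ := ‖g w0 - s‖ with hε
  have hεpos : 0 < ε := by
    rw [hε, norm_pos_iff, sub_ne_zero]
    exact hrsph w0 hw0
  have hsphlb : ∀ w ∈ sphere a0 r, ε ≤ ‖g w - s‖ := fun w hw => hw0min hw
  -- the tube around the slice disc in direction i1
  set P : ℂ × ℝ → (Fin n → ℂ) :=
    fun p => Function.update (φ p.1) i1 (a i1 + p.2) with hPdef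
  have hPcont : Continuous P := by
    apply (hφcont.comp continuous_fst).update i1
    exact continuous_const.add (Complex.continuous_ofReal.comp continuous_snd)
  have hP0 : ∀ w : ℂ, P (w, 0) = φ w := by
    intro w
    have : a i1 + ((0:ℝ):ℂ) = φ w i1 := by
      simp [hφdef, Function.update_apply, hi01]
    simp only [hPdef, this, Function.update_eq_self]
  have hPdist : ∀ (w : ℂ) (t : ℝ), dist (P (w, t)) (φ w) ≤ |t| := by
    intro w t
    rw [← hP0 w]
    rw [dist_pi_le_iff (abs_nonneg t)]
    intro j
    by_cases h : j = i1
    · subst h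
      simp only [hPdef, Function.update_self]
      rw [Complex.dist_eq]
      simp [Complex.norm_real]
    · simp [hPdef, Function.update_apply, h]
  -- thickening of the compact slice disc inside Ω
  have hdisccomp : IsCompact (φ '' closedBall a0 r) :=
    (isCompact_closedBall a0 r).image hφcont
  have hdiscΩ : φ '' closedBall a0 r ⊆ Ω := by
    rintro _ ⟨w, hw, rfl⟩
    exact hrU hw
  obtain ⟨δ, hδpos, hδ⟩ := hdisccomp.exists_thickening_subset_open hΩ hdiscΩ
  have htube : ∀ w ∈ closedBall a0 r, ∀ t : ℝ, |t| < δ → P (w, t) ∈ Ω := by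
    intro w hw t ht
    apply hδ
    rw [Metric.mem_thickening_iff]
    exact ⟨φ w, Set.mem_image_of_mem φ hw, lt_of_le_of_lt (hPdist w t) ht⟩
  -- the compact tube and uniform continuity of f on it
  set C2 : Set (Fin n → ℂ) := P '' (closedBall a0 r ×ˢ Set.Icc (-(δ/2)) (δ/2)) with hC2
  have hC2comp : IsCompact C2 :=
    ((isCompact_closedBall a0 r).prod (isCompact_Icc)).image hPcont
  have hC2Ω : C2 ⊆ Ω := by
    rintro _ ⟨⟨w, t⟩, ⟨hw, ht⟩, rfl⟩
    apply htube w hw t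
    rw [abs_lt]
    rcases ht with ⟨h1, h2⟩
    constructor <;> linarith
  have hfuc : UniformContinuousOn f C2 :=
    hC2comp.uniformContinuousOn_of_continuous (hf.continuousOn.mono hC2Ω)
  obtain ⟨δ2, hδ2pos, hδ2⟩ := Metric.uniformContinuousOn_iff.1 hfuc (ε/3) (by positivity)
  -- the shift amount
  set t0 : ℝ := min (δ/2) (δ2/2) with ht0
  have ht0pos : 0 < t0 := by positivity
  have ht0δ : t0 ≤ δ/2 := min_le_left _ _
  have ht0δ2 : t0 < δ2 := lt_of_le_of_lt (min_le_right _ _) (by linarith)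
  have hmemC2 : ∀ w ∈ closedBall a0 r, P (w, t0) ∈ C2 ∧ P (w, 0) ∈ C2 := by
    intro w hw
    constructor
    · exact ⟨(w, t0), ⟨hw, by constructor <;> [linarith; linarith]⟩, rfl⟩
    · exact ⟨(w, 0), ⟨hw, by constructor <;> [linarith; linarith]⟩, rfl⟩
  -- the shifted slice function
  set h : ℂ → ℂ := fun w => f (P (w, t0)) with hhdef
  have hclose : ∀ w ∈ closedBall a0 r, ‖h w - g w‖ < ε/3 := by
    intro w hw
    obtain ⟨hm1, hm2⟩ := hmemC2 w hw
    have hdist : dist (P (w, t0)) (P (w, 0)) < δ2 := by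
      rw [hP0 w]
      exact lt_of_le_of_lt (hPdist w t0) (by rwa [abs_of_pos ht0pos])
    have := hδ2 _ hm1 _ hm2 hdist
    rw [hP0 w] at this
    simpa [dist_eq_norm, hhdef, hgdef] using this
  -- h is differentiable near the closed ball
  set U2 : Set ℂ := (fun w => P (w, t0)) ⁻¹' Ω with hU2
  have hU2open : IsOpen U2 := hΩ.preimage (hPcont.comp (continuous_id.prodMk continuous_const))
  have hU2ball : closedBall a0 r ⊆ U2 := by
    intro w hw
    exact htube w hw t0 (by rw [abs_of_pos ht0pos]; linarith)
  have hPdiff : Differentiable ℂ (fun w : ℂ => P (w, t0)) := by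
    have : (fun w : ℂ => P (w, t0)) =
        fun w => Function.update (φ w) i1 (a i1 + (t0 : ℂ)) := rfl
    rw [this, differentiable_pi]
    intro j
    by_cases hj : j = i1
    · subst hj
      simp only [Function.update_self]
      exact differentiable_const _
    · simp only [Function.update_apply, hj, if_false]
      exact (differentiable_pi.1 hφdiff) j
  have hhdiff : DifferentiableOn ℂ h U2 :=
    hf.comp hPdiff.differentiableOn (fun w hw => hw)
  -- h attains the value s somewhere in the closed ball
  have hexists : ∃ w ∈ closedBall a0 r, h w = s := by
    by_contra hno
    push_neg at hno
    -- q = 1/(h - s) is holomorphic near the closed ball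
    set O : Set ℂ := U2 ∩ {w | h w ≠ s} with hO
    have hOopen : IsOpen O := by
      have : O = U2 ∩ h ⁻¹' ({s}ᶜ) := rfl
      rw [this]
      exact (hhdiff.continuousOn.isOpen_inter_preimage hU2open isClosed_singleton.isOpen_compl)
    have hballO : closedBall a0 r ⊆ O := fun w hw => ⟨hU2ball hw, hno w hw⟩
    set q : ℂ → ℂ := fun w => (h w - s)⁻¹ with hq
    have hqdiff : DifferentiableOn ℂ q O := by
      apply DifferentiableOn.inv ((hhdiff.mono Set.inter_subset_left).sub
        (differentiableOn_const s))
      intro w hw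
      exact sub_ne_zero.2 hw.2
    have hqdc : DiffContOnCl ℂ q (ball a0 r) := by
      apply DifferentiableOn.diffContOnCl
      rw [closure_ball a0 hrpos.ne']
      exact hqdiff.mono hballO
    have hqbound : ∀ w ∈ frontier (ball a0 r), ‖q w‖ ≤ (ε/3)⁻¹ := by
      intro w hw
      rw [frontier_ball a0 hrpos.ne'] at hw
      have h1 : ε ≤ ‖g w - s‖ := hsphlb w hw
      have h2 : ‖h w - g w‖ < ε/3 := hclose w (sphere_subset_closedBall hw)
      have h3 : ε/3 ≤ ‖h w - s‖ := by
        have : ‖g w - s‖ - ‖h w - g w‖ ≤ ‖h w - s‖ := by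
          have := norm_sub_norm_le (g w - s) (g w - h w)
          have heq : (g w - s) - (g w - h w) = h w - s := by ring
          rw [heq] at this
          have : ‖g w - s‖ - ‖g w - h w‖ ≤ ‖h w - s‖ := this
          rwa [norm_sub_rev (g w) (h w)] at this
        linarith
      rw [hq]
      simp only [norm_inv]
      apply inv_anti₀ (by positivity) h3
    have hcenter : ‖q a0‖ ≤ (ε/3)⁻¹ := by
      apply Complex.norm_le_of_forall_mem_frontier_norm_le isBounded_ball hqdc hqbound
      rw [closure_ball a0 hrpos.ne']
      exact mem_closedBall_self hrpos.le
    -- but q is large at the center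
    have hsmall : ‖h a0 - s‖ < ε/3 := by
      have := hclose a0 (mem_closedBall_self hrpos.le)
      rwa [hga0] at this
    have hne0 : h a0 - s ≠ 0 := sub_ne_zero.2 (hno a0 (mem_closedBall_self hrpos.le))
    have : (ε/3)⁻¹ < ‖q a0‖ := by
      rw [hq]
      simp only [norm_inv]
      apply (inv_lt_inv₀ (by positivity) (norm_pos_iff.2 hne0)).2 hsmall
    linarith
  obtain ⟨w', hw', hhw'⟩ := hexists
  -- the found point contradicts maximality of Re(a i1) on L
  have hpΩ : P (w', t0) ∈ Ω := htube w' hw' t0 (by rw [abs_of_pos ht0pos]; linarith)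
  have hpL : P (w', t0) ∈ L := hLmem _ hpΩ hhw'
  have hcoord : P (w', t0) i1 = a i1 + (t0 : ℂ) := by
    simp [hPdef]
  have hle : (P (w', t0) i1).re ≤ (a i1).re := hmax hpL
  rw [hcoord] at hle
  simp only [Complex.add_re, Complex.ofReal_re] at hle
  linarith
end

section
/- Let n ≥ 2 and let f : ℂⁿ → ℂ be an entire (holomorphic) function. Then the zero set f⁻¹({0}) is not a nonempty compact set; i.e., if f has a zero, it has zeros arbitrarily far from the origin or f ≡ 0 on some unbounded set of zeros—formally: there is no nonempty compact K ⊂ ℂⁿ with f⁻¹({0}) = K. -/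
open Metric Set Filter

theorem entire_zero_set_not_compact (n : ℕ) (hn : 2 ≤ n)
    (f : (Fin n → ℂ) → ℂ) (hf : Differentiable ℂ f) :
    ¬ ∃ K : Set (Fin n → ℂ), K.Nonempty ∧ IsCompact K ∧ f ⁻¹' {0} = K := by
  rintro ⟨K, ⟨a, haK⟩, hKc, hKeq⟩
  set i0 : Fin n := ⟨0, by omega⟩ with hi0
  set i1 : Fin n := ⟨1, by omega⟩ with hi1
  have hne : i1 ≠ i0 := by simp [hi0, hi1, Fin.ext_iff]
  have hne' : i0 ≠ i1 := by simp [hi0, hi1, Fin.ext_iff]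
  -- the affine 2-plane through `a`
  set ψ : ℂ × ℂ → (Fin n → ℂ) := fun p => a + Pi.single i0 p.1 + Pi.single i1 p.2 with hψ
  have hψd : Differentiable ℂ ψ := by
    have h1 : Differentiable ℂ (Pi.single (M := fun _ : Fin n => ℂ) i0) := by
      intro y
      exact (hasFDerivAt_single (𝕜 := ℂ) (E := fun _ : Fin n => ℂ) (i := i0) y).differentiableAt
    have h2 : Differentiable ℂ (Pi.single (M := fun _ : Fin n => ℂ) i1) := by
      intro y
      exact (hasFDerivAt_single (𝕜 := ℂ) (E := fun _ : Fin n => ℂ) (i := i1) y).differentiableAt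
    exact ((differentiable_const a).add (h1.comp differentiable_fst)).add
      (h2.comp differentiable_snd)
  set F : ℂ × ℂ → ℂ := fun p => f (ψ p) with hFdef
  have hF : Differentiable ℂ F := hf.comp hψd
  -- bound on the zero set of F
  obtain ⟨M, hM⟩ : ∃ M, K ⊆ closedBall 0 M := hKc.isBounded.subset_closedBall 0
  set C : ℝ := M + ‖a‖ with hCdef
  have hψ0 : ψ (0, 0) = a := by simp [hψ]
  have hFa : F (0, 0) = 0 := by
    have h0 : a ∈ f ⁻¹' {0} := hKeq ▸ haK
    show f (ψ (0, 0)) = 0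
    rw [hψ0]
    simpa using h0
  have hmemK : ∀ p : ℂ × ℂ, F p = 0 → ψ p ∈ K := by
    intro p hp
    rw [← hKeq]
    simpa using hp
  have hbound : ∀ p : ℂ × ℂ, F p = 0 → ‖p.1‖ ≤ C ∧ ‖p.2‖ ≤ C := by
    intro p hp
    have hmem := hM (hmemK p hp)
    have hnorm : ‖ψ p‖ ≤ M := by simpa using mem_closedBall_zero_iff.mp hmem
    have e0 : ψ p i0 = a i0 + p.1 := by
      simp [hψ, Pi.single_eq_same, Pi.single_eq_of_ne hne']
    have e1 : ψ p i1 = a i1 + p.2 := by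
      simp [hψ, Pi.single_eq_same, Pi.single_eq_of_ne hne]
    constructor
    · have : ‖p.1‖ = ‖ψ p i0 - a i0‖ := by rw [e0]; ring_nf
      calc ‖p.1‖ = ‖ψ p i0 - a i0‖ := this
        _ ≤ ‖ψ p i0‖ + ‖a i0‖ := norm_sub_le _ _
        _ ≤ ‖ψ p‖ + ‖a‖ := add_le_add (norm_le_pi_norm _ i0) (norm_le_pi_norm a i0)
        _ ≤ C := by rw [hCdef]; linarith
    · have : ‖p.2‖ = ‖ψ p i1 - a i1‖ := by rw [e1]; ring_nf
      calc ‖p.2‖ = ‖ψ p i1 - a i1‖ := this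
        _ ≤ ‖ψ p i1‖ + ‖a i1‖ := norm_sub_le _ _
        _ ≤ ‖ψ p‖ + ‖a‖ := add_le_add (norm_le_pi_norm _ i1) (norm_le_pi_norm a i1)
        _ ≤ C := by rw [hCdef]; linarith
  -- the zero set of F is compact
  set Z : Set (ℂ × ℂ) := F ⁻¹' {0} with hZdef
  have hZc : IsCompact Z := by
    apply Metric.isCompact_of_isClosed_isBounded
    · exact isClosed_singleton.preimage hF.continuous
    · apply Bornology.IsBounded.subset (Metric.isBounded_closedBall (x := (0 : ℂ × ℂ)) (r := C))
      intro p hp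
      have h := hbound p hp
      simp only [mem_closedBall, dist_zero_right, Prod.norm_def]
      exact max_le h.1 h.2
  set T : Set ℂ := Prod.snd '' Z with hTdef
  have hTne : T.Nonempty := ⟨0, ⟨(0, 0), hFa, rfl⟩⟩
  have hTclosed : IsClosed T := (hZc.image continuous_snd).isClosed
  -- T is open (Hurwitz-type argument via the minimum modulus principle)
  have hTopen : IsOpen T := by
    rw [isOpen_iff_mem_nhds]
    rintro t₀ ⟨⟨s₀, t₀⟩, hz, rfl⟩
    have hgz : F (s₀, t₀) = 0 := hz
    set g : ℂ → ℂ := fun s => F (s, t₀) with hgdef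
    have hg : Differentiable ℂ g := hF.comp (differentiable_id.prodMk (differentiable_const _))
    -- g is not identically zero
    set s₁ : ℂ := ((|C| + 1 : ℝ) : ℂ) with hs₁
    have hgs₁ : g s₁ ≠ 0 := by
      intro h
      have := (hbound (s₁, t₀) h).1
      simp only [hs₁, Complex.norm_real, Real.norm_eq_abs] at this
      have : |(|C| + 1)| ≤ C := this
      rw [abs_of_nonneg (by positivity)] at this
      have := le_abs_self C
      linarith
    -- zeros of g are isolated
    rcases (hg.analyticAt s₀).eventually_eq_zero_or_eventually_ne_zero with h | h
    · exfalso
      have hall : AnalyticOnNhd ℂ g univ := fun z _ => hg.analyticAt z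
      have := hall.eqOn_zero_of_preconnected_of_eventuallyEq_zero
        isPreconnected_univ (mem_univ s₀) h
      exact hgs₁ (this (mem_univ s₁))
    · -- get a circle around s₀ on which g does not vanish
      rw [eventually_nhdsWithin_iff, Metric.eventually_nhds_iff] at h
      obtain ⟨r, hr, hball⟩ := h
      set ρ : ℝ := r / 2 with hρ
      have hρpos : 0 < ρ := by positivity
      have hsphere : ∀ s ∈ sphere s₀ ρ, g s ≠ 0 := by
        intro s hs
        apply hball
        · rw [mem_sphere_iff_norm] at hs
          rw [dist_eq_norm, hs]; linarith
        · intro heq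
          rw [heq] at hs
          simp at hs
          linarith
      -- minimum of ‖g‖ on the sphere
      obtain ⟨sm, hsm, hmin⟩ := (isCompact_sphere s₀ ρ).exists_isMinOn
        (NormedSpace.sphere_nonempty.mpr hρpos.le)
        (hg.continuous.norm.continuousOn)
      set m : ℝ := ‖g sm‖ with hm
      have hmpos : 0 < m := norm_pos_iff.mpr (hsphere sm hsm)
      -- eventual bounds in t
      have hev1 : ∀ᶠ t in nhds t₀, ∀ s ∈ sphere s₀ ρ, m / 2 < ‖F (s, t)‖ := by
        apply (isCompact_sphere s₀ ρ).eventually_forall_of_forall_eventually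
        intro s hs
        have hc : ContinuousAt (fun z : ℂ × ℂ => ‖F (z.2, z.1)‖) (t₀, s) :=
          (hF.continuous.comp (continuous_snd.prodMk continuous_fst)).norm.continuousAt
        have hlt : m / 2 < ‖F (s, t₀)‖ := lt_of_lt_of_le (by linarith) (hmin hs)
        exact hc.eventually (eventually_gt_nhds hlt)
      have hev2 : ∀ᶠ t in nhds t₀, ‖F (s₀, t)‖ < m / 2 := by
        have hc : ContinuousAt (fun t : ℂ => ‖F (s₀, t)‖) t₀ :=
          (hF.continuous.comp ((continuous_const (y := s₀)).prodMk continuous_id)).norm.continuousAt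
        have h0 : ‖F (s₀, t₀)‖ < m / 2 := by rw [hgz]; simpa using half_pos hmpos
        exact hc.eventually (eventually_lt_nhds h0)
      have hev : ∀ᶠ t in nhds t₀, t ∈ T := by
        filter_upwards [hev1, hev2] with t h1 h2
        -- show ∃ s, F (s, t) = 0
        by_contra hcon
        have hnz : ∀ s : ℂ, F (s, t) ≠ 0 := by
          intro s hzero
          exact hcon ⟨(s, t), hzero, rfl⟩
        -- minimum modulus principle
        set h : ℂ → ℂ := fun s => (F (s, t))⁻¹ with hhdef
        have hgt : Differentiable ℂ fun s => F (s, t) :=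
          hF.comp (differentiable_id.prodMk (differentiable_const _))
        have hhd : Differentiable ℂ h := hgt.inv hnz
        have key : ‖h s₀‖ ≤ (m / 2)⁻¹ := by
          apply Complex.norm_le_of_forall_mem_frontier_norm_le
            (isBounded_ball (x := s₀) (r := ρ)) hhd.diffContOnCl
          · intro z hzf
            rw [frontier_ball s₀ hρpos.ne'] at hzf
            rw [hhdef]
            simp only [norm_inv]
            exact inv_anti₀ (half_pos hmpos) (h1 z hzf).le
          · exact subset_closure (mem_ball_self hρpos)
        rw [hhdef] at key
        simp only [norm_inv] at key
        have hpos : 0 < ‖F (s₀, t)‖ := norm_pos_iff.mpr (hnz s₀)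
        rw [inv_le_inv₀ hpos (half_pos hmpos)] at key
        linarith
      exact hev
  -- conclude: T is clopen nonempty, hence all of ℂ, contradicting boundedness
  have hclop : IsClopen T := ⟨hTclosed, hTopen⟩
  have hTuniv : T = univ := hclop.eq_univ hTne
  have : ((|C| + 1 : ℝ) : ℂ) ∈ T := hTuniv ▸ mem_univ _
  obtain ⟨p, hp, hp2⟩ := this
  have := (hbound p hp).2
  rw [hp2] at this
  simp only [Complex.norm_real, Real.norm_eq_abs] at this
  rw [abs_of_nonneg (by positivity)] at this
  have := le_abs_self C
  linarith
end

section
/- Let X be a complex vector space, Ω ⊂ X a set that is polygonally connected and 2-open (its intersection with every complex-affine subspace L of dimension ≤ 2 is open in L), and let C ⊂ Ω be such that C − c is real-absorbing for some c ∈ C (for every x ∈ X there is ε > 0 with [0,ε]·x ⊂ C − c). If f : Ω → ℂ is Gâteaux holomorphic (its restriction to each complex line meeting Ω is holomorphic in the one complex variable, locally) and f vanishes on C, then f vanishes identically on Ω. -/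
/-- `f` is Gâteaux holomorphic on `Ω`: along every complex line through a point of `Ω`,
`f` is holomorphic on some disc of parameters. -/
def GateauxHolomorphicOn {X : Type*} [AddCommGroup X] [Module ℂ X]
    (f : X → ℂ) (Ω : Set X) : Prop :=
  ∀ a ∈ Ω, ∀ v : X, ∃ r > 0,
    DifferentiableOn ℂ (fun z : ℂ => f (a + z • v)) (Metric.ball (0 : ℂ) r)

/-- `Ω` is 2-open: its preimage under every affine parametrization by at most two
complex parameters is open. -/
def TwoOpen {X : Type*} [AddCommGroup X] [Module ℂ X] (Ω : Set X) : Prop :=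
  ∀ a u v : X, IsOpen {p : ℂ × ℂ | a + p.1 • u + p.2 • v ∈ Ω}

/-- `Ω` is polygonally connected: any two points can be joined by a finite chain of
linear segments inside `Ω`. -/
def PolygonallyConnected {X : Type*} [AddCommGroup X] [Module ℂ X] (Ω : Set X) : Prop :=
  ∀ x ∈ Ω, ∀ y ∈ Ω, ∃ (m : ℕ) (p : ℕ → X), p 0 = x ∧ p m = y ∧
    ∀ i < m, ∀ t : ℝ, 0 ≤ t → t ≤ 1 →
      p i + (t : ℂ) • (p (i + 1) - p i) ∈ Ω



private lemma line_vanish {X : Type*} [AddCommGroup X] [Module ℂ X]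
    (Ω : Set X) (hΩ2 : ∀ a u v : X, IsOpen {p : ℂ × ℂ | a + p.1 • u + p.2 • v ∈ Ω})
    (f : X → ℂ)
    (hf : ∀ a ∈ Ω, ∀ v : X, ∃ r > 0,
      DifferentiableOn ℂ (fun z : ℂ => f (a + z • v)) (Metric.ball (0 : ℂ) r))
    (a v : X)
    (hseg : ∀ t : ℝ, 0 ≤ t → t ≤ 1 → a + (t : ℂ) • v ∈ Ω)
    (hzero : ∃ ε > 0, ∀ t : ℝ, 0 ≤ t → t ≤ ε → f (a + (t : ℂ) • v) = 0) :
    f (a + v) = 0 := by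
  set U : Set ℂ := {z : ℂ | a + z • v ∈ Ω} with hU
  have hUopen : IsOpen U := by
    have h := hΩ2 a v 0
    have : U = (fun z : ℂ => (z, (0 : ℂ))) ⁻¹' {p : ℂ × ℂ | a + p.1 • v + p.2 • (0:X) ∈ Ω} := by
      ext z; simp [hU]
    rw [this]
    exact h.preimage (by fun_prop)
  set g : ℂ → ℂ := fun z => f (a + z • v) with hg
  have hganal : AnalyticOnNhd ℂ g U := by
    intro z₀ hz₀
    obtain ⟨r, hr, hd⟩ := hf (a + z₀ • v) hz₀ v
    have hdiff : DifferentiableOn ℂ g (Metric.ball z₀ r) := by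
      have hcomp : DifferentiableOn ℂ
          (fun z : ℂ => f (a + z₀ • v + (z - z₀) • v)) (Metric.ball z₀ r) := by
        apply hd.comp (differentiable_id.sub_const z₀).differentiableOn
        intro z hz
        simpa [Metric.mem_ball, dist_eq_norm] using hz
      refine hcomp.congr fun z hz => ?_
      have h2 : a + z₀ • v + (z - z₀) • v = a + z • v := by
        rw [sub_smul]; abel
      simp only [hg, h2]
    exact hdiff.analyticAt (Metric.isOpen_ball.mem_nhds (by simpa using hr))
  have h0U : (0 : ℂ) ∈ U := by simpa [hU] using hseg 0 le_rfl zero_le_one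
  set V : Set ℂ := connectedComponentIn U 0 with hV
  have hKsub : ((fun t : ℝ => (t : ℂ)) '' Set.Icc 0 1) ⊆ U := by
    rintro z ⟨t, ht, rfl⟩; exact hseg t ht.1 ht.2
  have hKpre : IsPreconnected ((fun t : ℝ => (t : ℂ)) '' Set.Icc 0 1) :=
    (isPreconnected_Icc).image _ (Complex.continuous_ofReal.continuousOn)
  have hKV : ((fun t : ℝ => (t : ℂ)) '' Set.Icc 0 1) ⊆ V :=
    hKpre.subset_connectedComponentIn ⟨0, ⟨le_rfl, zero_le_one⟩, by simp⟩ hKsub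
  have h1V : (1 : ℂ) ∈ V := hKV ⟨1, ⟨zero_le_one, le_rfl⟩, by simp⟩
  have h0V : (0 : ℂ) ∈ V := mem_connectedComponentIn h0U
  have hfreq : ∃ᶠ z in nhdsWithin (0:ℂ) {(0:ℂ)}ᶜ, g z = 0 := by
    obtain ⟨ε, hε, hz⟩ := hzero
    rw [Filter.frequently_iff]
    intro W hW
    rw [Metric.mem_nhdsWithin_iff] at hW
    obtain ⟨δ, hδ, hball⟩ := hW
    set t : ℝ := min ε δ / 2 with htdef
    have ht : 0 < t := by positivity
    refine ⟨(t : ℂ), hball ⟨?_, ?_⟩, hz t ht.le ?_⟩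
    · simp only [Metric.mem_ball, dist_zero_right, Complex.norm_real]
      rw [Real.norm_eq_abs, abs_of_pos ht]
      calc t < min ε δ := by simpa [htdef] using half_lt_self (lt_min hε hδ)
        _ ≤ δ := min_le_right _ _
    · simp only [Set.mem_compl_iff, Set.mem_singleton_iff]
      exact_mod_cast ht.ne'
    · calc t ≤ min ε δ := by simpa [htdef] using half_le_self (lt_min hε hδ).le
        _ ≤ ε := min_le_left _ _
  have heq : Set.EqOn g 0 V :=
    (hganal.mono (connectedComponentIn_subset U 0)).eqOn_zero_of_preconnected_of_frequently_eq_zero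
      isPreconnected_connectedComponentIn h0V hfreq
  have := heq h1V
  simpa [hg, one_smul] using this

private lemma star_propagate {X : Type*} [AddCommGroup X] [Module ℂ X]
    (Ω : Set X) (hΩ2 : ∀ a u v : X, IsOpen {p : ℂ × ℂ | a + p.1 • u + p.2 • v ∈ Ω})
    (f : X → ℂ)
    (hf : ∀ a ∈ Ω, ∀ v : X, ∃ r > 0,
      DifferentiableOn ℂ (fun z : ℂ => f (a + z • v)) (Metric.ball (0 : ℂ) r))
    (a b : X)
    (hseg : ∀ t : ℝ, 0 ≤ t → t ≤ 1 → a + (t : ℂ) • (b - a) ∈ Ω)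
    (hPa : ∀ v : X, ∃ ε > 0, ∀ t : ℝ, 0 ≤ t → t ≤ ε → f (a + (t : ℂ) • v) = 0) :
    ∀ v : X, ∃ ε > 0, ∀ t : ℝ, 0 ≤ t → t ≤ ε → f (b + (t : ℂ) • v) = 0 := by
  intro v
  set S : Set (ℂ × ℂ) := {p : ℂ × ℂ | a + p.1 • (b - a) + p.2 • v ∈ Ω} with hS
  have hSopen : IsOpen S := hΩ2 a (b - a) v
  set K : Set (ℂ × ℂ) := (fun t : ℝ => ((t : ℂ), (0 : ℂ))) '' Set.Icc 0 1 with hK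
  have hKcpt : IsCompact K :=
    (isCompact_Icc).image (by fun_prop)
  have hKS : K ⊆ S := by
    rintro p ⟨t, ht, rfl⟩
    simpa [hS] using hseg t ht.1 ht.2
  obtain ⟨δ, hδ, hthick⟩ := hKcpt.exists_thickening_subset_open hSopen hKS
  -- for every complex w with ‖w‖ < δ, f (b + w • v) = 0
  have key : ∀ w : ℂ, ‖w‖ < δ → f (b + w • v) = 0 := by
    intro w hw
    have hres := line_vanish Ω hΩ2 f hf a ((b - a) + w • v)
      (by
        intro t ht0 ht1
        have hmem : (((t : ℂ)), (t : ℂ) * w) ∈ Metric.thickening δ K := by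
          rw [Metric.mem_thickening_iff]
          refine ⟨((t : ℂ), (0 : ℂ)), ⟨t, ⟨ht0, ht1⟩, rfl⟩, ?_⟩
          rw [Prod.dist_eq]
          simp only [dist_self, dist_zero_right]
          rw [max_eq_right (norm_nonneg _)]
          calc ‖(t : ℂ) * w‖ = ‖(t:ℂ)‖ * ‖w‖ := norm_mul _ _
            _ ≤ 1 * ‖w‖ := by
                apply mul_le_mul_of_nonneg_right _ (norm_nonneg w)
                rw [Complex.norm_real, Real.norm_eq_abs, abs_of_nonneg ht0]; exact ht1
            _ = ‖w‖ := one_mul _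
            _ < δ := hw
        have := hthick hmem
        simp only [hS, Set.mem_setOf_eq] at this
        have heq : a + (t : ℂ) • ((b - a) + w • v) = a + (t : ℂ) • (b - a) + ((t:ℂ) * w) • v := by
          rw [smul_add, mul_smul]; abel
        rw [heq]; exact this)
      (by
        obtain ⟨ε, hε, hz⟩ := hPa ((b - a) + w • v)
        exact ⟨ε, hε, hz⟩)
    have heq2 : a + ((b - a) + w • v) = b + w • v := by abel
    rw [heq2] at hres
    exact hres
  refine ⟨δ / 2, by positivity, fun t ht0 htδ => ?_⟩
  apply key
  rw [Complex.norm_real, Real.norm_eq_abs, abs_of_nonneg ht0]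
  linarith

theorem identity_theorem_gateaux {X : Type*} [AddCommGroup X] [Module ℂ X]
    (Ω : Set X) (hΩ2 : TwoOpen Ω) (hΩconn : PolygonallyConnected Ω)
    (C : Set X) (hCΩ : C ⊆ Ω) (c : X) (hc : c ∈ C)
    (habs : ∀ x : X, ∃ ε > 0, ∀ t : ℝ, 0 ≤ t → t ≤ ε → c + (t : ℂ) • x ∈ C)
    (f : X → ℂ) (hf : GateauxHolomorphicOn f Ω)
    (hfC : ∀ x ∈ C, f x = 0) :
    ∀ x ∈ Ω, f x = 0 := by
  intro x hx
  obtain ⟨m, p, hp0, hpm, hpseg⟩ := hΩconn c (hCΩ hc) x hx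
  have key : ∀ i, i ≤ m → ∀ v : X, ∃ ε > 0, ∀ t : ℝ, 0 ≤ t → t ≤ ε →
      f (p i + (t : ℂ) • v) = 0 := by
    intro i
    induction i with
    | zero =>
      intro _ v
      obtain ⟨ε, hε, hC⟩ := habs v
      exact ⟨ε, hε, fun t ht0 htε => by rw [hp0]; exact hfC _ (hC t ht0 htε)⟩
    | succ n ih =>
      intro hn
      have hnm : n < m := hn
      exact star_propagate Ω hΩ2 f hf (p n) (p (n + 1)) (fun t ht0 ht1 => hpseg n hnm t ht0 ht1)
        (ih hnm.le)
  obtain ⟨ε, hε, hz⟩ := key m le_rfl 0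
  have := hz 0 le_rfl hε.le
  rw [hpm] at this
  simpa using this
end

section
/- (Max-min seminorm principle, finite dimensional ℂ-valued case) Let Ω ⊂ ℂⁿ be open and connected, f : Ω → ℂᵐ holomorphic (m ≥ 1), and p a norm on ℂᵐ. If p ∘ f has a local maximum at c ∈ Ω, then c is a global minimum of p ∘ f on Ω, and f(Ω) is contained in an affine hyperplane; in particular the closure of f(Ω) has empty interior (if m ≥ 2) and if p(f(c)) > 0 then f vanishes nowhere on Ω. -/
open Set Function


/-- Type synonym for `Fin m → ℂ` carrying a custom norm. -/
def DualAuxSpace (m : ℕ) : Type := Fin m → ℂ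

instance (m : ℕ) : AddCommGroup (DualAuxSpace m) :=
  inferInstanceAs (AddCommGroup (Fin m → ℂ))
noncomputable instance (m : ℕ) : Module ℂ (DualAuxSpace m) :=
  inferInstanceAs (Module ℂ (Fin m → ℂ))

def toAux (m : ℕ) : (Fin m → ℂ) →ₗ[ℂ] DualAuxSpace m :=
  { toFun := fun x => x
    map_add' := fun _ _ => rfl
    map_smul' := fun _ _ => rfl }

def ofAux (m : ℕ) : DualAuxSpace m → (Fin m → ℂ) := fun x => x

lemma exists_dual_for_seminorm (m : ℕ) (hm : 1 ≤ m) (p : Seminorm ℂ (Fin m → ℂ))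
    (hp : ∀ y, p y = 0 → y = 0) (v : Fin m → ℂ) :
    ∃ φ : (Fin m → ℂ) →ₗ[ℂ] ℂ, φ ≠ 0 ∧ φ v = (p v : ℂ) ∧ ∀ y, ‖φ y‖ ≤ p y := by
  letI inst1 : NormedAddCommGroup (DualAuxSpace m) := AddGroupNorm.toNormedAddCommGroup
    { toFun := fun y => p (ofAux m y)
      map_zero' := map_zero p
      add_le' := fun x y => map_add_le_add p (ofAux m x) (ofAux m y)
      neg' := fun y => map_neg_eq_map p (ofAux m y)
      eq_zero_of_map_eq_zero' := fun y hy => hp (ofAux m y) hy }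
  letI inst2 : NormedSpace ℂ (DualAuxSpace m) :=
    { norm_smul_le := fun a x => (map_smul_eq_mul p a (ofAux m x)).le }
  haveI ntr : Nontrivial (DualAuxSpace m) := by
    refine ⟨(0 : Fin m → ℂ), (fun _ => 1 : Fin m → ℂ), fun h => ?_⟩
    have := congrFun h ⟨0, hm⟩
    simp at this
  obtain ⟨g, hg1, hg2⟩ := exists_dual_vector' ℂ (toAux m v)
  refine ⟨g.toLinearMap.comp (toAux m), ?_, hg2, fun y => ?_⟩
  · intro h
    have hle : ‖g‖ ≤ 0 := by
      refine g.opNorm_le_bound le_rfl fun x => ?_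
      have hx : g (toAux m (ofAux m x)) = 0 := DFunLike.congr_fun h (ofAux m x)
      have hx' : g x = 0 := hx
      rw [hx']
      simp
    rw [hg1] at hle
    norm_num at hle
  · show ‖g (toAux m y)‖ ≤ p y
    refine le_trans (g.le_opNorm (toAux m y)) ?_
    rw [hg1, one_mul]
    exact le_of_eq rfl

lemma eqOn_const_of_convex {n : ℕ} {g : (Fin n → ℂ) → ℂ} {B : Set (Fin n → ℂ)}
    (hB : Convex ℝ B) (hBo : IsOpen B) (hgd : DifferentiableOn ℂ g B)
    {y : Fin n → ℂ} (hy : y ∈ B) {k : ℂ} (hloc : g =ᶠ[nhds y] fun _ => k) :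
    ∀ z ∈ B, g z = k := by
  intro z hz
  set L : ℂ → (Fin n → ℂ) := fun t => y + t • (z - y) with hL
  have hLd : Differentiable ℂ L := (differentiable_id.smul_const (z - y)).const_add y
  have hLc : Continuous L := hLd.continuous
  have hpre_open : IsOpen (L ⁻¹' B) := hBo.preimage hLc
  have hpre_conv : Convex ℝ (L ⁻¹' B) := by
    intro t₁ h₁ t₂ h₂ a b ha hb hab
    have hb' : b = 1 - a := by linarith
    subst hb'
    have hkey : L (a • t₁ + (1 - a) • t₂) = a • L t₁ + (1 - a) • L t₂ := by
      simp only [hL]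
      match_scalars <;> (simp only [Algebra.smul_def] <;> push_cast <;> ring)
    show L (a • t₁ + (1 - a) • t₂) ∈ B
    rw [hkey]
    exact hB h₁ h₂ ha hb (by ring)
  have h0 : (0 : ℂ) ∈ L ⁻¹' B := by simpa [hL] using hy
  have h1 : (1 : ℂ) ∈ L ⁻¹' B := by simpa [hL] using hz
  have hgL : DifferentiableOn ℂ (g ∘ L) (L ⁻¹' B) :=
    hgd.comp hLd.differentiableOn (fun t ht => ht)
  have hga : AnalyticOnNhd ℂ (g ∘ L) (L ⁻¹' B) := hgL.analyticOnNhd hpre_open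
  have hka : AnalyticOnNhd ℂ (fun _ : ℂ => k) (L ⁻¹' B) := analyticOnNhd_const
  have hev : (g ∘ L) =ᶠ[nhds (0 : ℂ)] fun _ => k := by
    have : Filter.Tendsto L (nhds 0) (nhds y) := by
      simpa [hL] using hLc.tendsto (0 : ℂ)
    exact hloc.comp_tendsto this
  have := hga.eqOn_of_preconnected_of_eventuallyEq hka hpre_conv.isPreconnected h0 hev h1
  simpa [hL] using this


theorem max_min_seminorm_principle (n m : ℕ) (hm : 1 ≤ m)
    (Ω : Set (Fin n → ℂ)) (hΩ : IsOpen Ω) (hΩc : IsConnected Ω)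
    (f : (Fin n → ℂ) → (Fin m → ℂ)) (hf : DifferentiableOn ℂ f Ω)
    (p : Seminorm ℂ (Fin m → ℂ)) (hp : ∀ y, p y = 0 → y = 0)
    (c : Fin n → ℂ) (hc : c ∈ Ω)
    (hmax : ∃ U : Set (Fin n → ℂ), IsOpen U ∧ c ∈ U ∧ U ⊆ Ω ∧
      ∀ x ∈ U, p (f x) ≤ p (f c)) :
    (∀ x ∈ Ω, p (f c) ≤ p (f x)) ∧
    (∃ φ : (Fin m → ℂ) →ₗ[ℂ] ℂ, φ ≠ 0 ∧ ∀ x ∈ Ω, φ (f x) = φ (f c)) ∧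
    (2 ≤ m → interior (closure (f '' Ω)) = ∅) ∧
    (0 < p (f c) → ∀ x ∈ Ω, f x ≠ 0) := by
  obtain ⟨φ, hφ0, hφv, hφle⟩ := exists_dual_for_seminorm m hm p hp (f c)
  obtain ⟨U, hUo, hcU, hUΩ, hU⟩ := hmax
  have φcont : Continuous φ := φ.continuous_of_finiteDimensional
  set g : (Fin n → ℂ) → ℂ := fun x => φ (f x) with hg
  have hφdiff : Differentiable ℂ φ := (LinearMap.toContinuousLinearMap φ).differentiable
  have hgd : DifferentiableOn ℂ g Ω := hφdiff.comp_differentiableOn hf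
  -- local max of ‖g‖ on a ball
  obtain ⟨r, hr, hball⟩ := Metric.isOpen_iff.1 hUo c hcU
  have hballΩ : Metric.ball c r ⊆ Ω := hball.trans hUΩ
  have hnormc : ‖g c‖ = p (f c) := by
    rw [hg]; simp only [hφv]
    simp [Complex.norm_real, abs_of_nonneg (apply_nonneg p _)]
  have hmaxball : IsMaxOn (norm ∘ g) (Metric.ball c r) c := by
    intro x hx
    simp only [Function.comp_apply, Set.mem_setOf_eq, hnormc]
    exact (hφle (f x)).trans (hU x (hball hx))
  have heq : EqOn g (const _ (g c)) (Metric.ball c r) :=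
    Complex.eqOn_of_isPreconnected_of_isMaxOn_norm (convex_ball c r).isPreconnected
      Metric.isOpen_ball (hgd.mono hballΩ) (Metric.mem_ball_self hr) hmaxball
  have hkey : ∀ x ∈ Ω, g x = g c := by
    set V : Set (Fin n → ℂ) := {x | x ∈ Ω ∧ g =ᶠ[nhds x] fun _ => g c} with hV
    have hVsub : V ⊆ Ω := fun x hx => hx.1
    have hprop : ∀ x ∈ Ω, ∀ s : ℝ, 0 < s → Metric.ball x s ⊆ Ω →
        (Metric.ball x s ∩ V).Nonempty → Metric.ball x s ⊆ V := by
      intro x hx s hs hsub ⟨y, hyB, hyV⟩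
      have hconst : ∀ z ∈ Metric.ball x s, g z = g c :=
        eqOn_const_of_convex (convex_ball x s) Metric.isOpen_ball (hgd.mono hsub) hyB hyV.2
      intro z hzB
      refine ⟨hsub hzB, ?_⟩
      exact Filter.eventuallyEq_of_mem (Metric.isOpen_ball.mem_nhds hzB)
        (fun w hw => hconst w hw)
    have hVopen : IsOpen V := by
      refine isOpen_iff_mem_nhds.2 fun x hx => ?_
      obtain ⟨s, hs, hsub⟩ := Metric.isOpen_iff.1 hΩ x (hVsub hx)
      exact Filter.mem_of_superset (Metric.ball_mem_nhds x hs)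
        (hprop x (hVsub hx) s hs hsub ⟨x, Metric.mem_ball_self hs, hx⟩)
    have hWopen : IsOpen (interior (Ω \ V)) := isOpen_interior
    have hdisj : Disjoint V (interior (Ω \ V)) := by
      refine Set.disjoint_left.2 fun x hxV hxW => ?_
      exact (interior_subset hxW).2 hxV
    have hcover : Ω ⊆ V ∪ interior (Ω \ V) := by
      intro x hx
      by_cases hxV : x ∈ V
      · exact Or.inl hxV
      · obtain ⟨s, hs, hsub⟩ := Metric.isOpen_iff.1 hΩ x hx
        refine Or.inr ?_
        rw [mem_interior]
        refine ⟨Metric.ball x s, fun z hz => ⟨hsub hz, fun hzV => hxV ?_⟩, Metric.isOpen_ball,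
          Metric.mem_ball_self hs⟩
        exact hprop x hx s hs hsub ⟨z, hz, hzV⟩ (Metric.mem_ball_self hs)
    have hcV : c ∈ V := by
      refine ⟨hc, ?_⟩
      exact Filter.eventuallyEq_of_mem (Metric.ball_mem_nhds c hr) heq
    have hΩV : Ω ⊆ V :=
      hΩc.isPreconnected.subset_left_of_subset_union hVopen hWopen hdisj hcover ⟨c, hc, hcV⟩
    intro x hx
    exact ((hΩV hx).2).self_of_nhds
  have hmin : ∀ x ∈ Ω, p (f c) ≤ p (f x) := fun x hx => by
    calc p (f c) = ‖g c‖ := hnormc.symm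
    _ = ‖g x‖ := by rw [hkey x hx]
    _ ≤ p (f x) := hφle (f x)
  refine ⟨hmin, ⟨φ, hφ0, fun x hx => hkey x hx⟩, ?_, ?_⟩
  · intro _
    by_contra h
    obtain ⟨y, hy⟩ := Set.nonempty_iff_ne_empty.2 h
    have hsub : closure (f '' Ω) ⊆ {z | φ z = φ (f c)} := by
      apply closure_minimal
      · rintro z ⟨x, hx, rfl⟩; exact hkey x hx
      · exact isClosed_eq φcont continuous_const
    have hyint : y ∈ interior {z | φ z = φ (f c)} :=
      interior_mono hsub hy
    -- translate: {z | φ z = φ (f c)} = (f c) + ker φ has empty interior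
    have hker : (LinearMap.ker φ : Set (Fin m → ℂ)) = (fun z => z - f c) '' {z | φ z = φ (f c)} := by
      ext z
      constructor
      · intro hz
        exact ⟨z + f c, by simpa [map_add] using hz, by simp⟩
      · rintro ⟨w, hw, rfl⟩
        simp only [SetLike.mem_coe, LinearMap.mem_ker, map_sub]
        exact sub_eq_zero.2 hw
    have himg : (fun z => z - f c) '' interior {z | φ z = φ (f c)} =
        interior ((fun z => z - f c) '' {z | φ z = φ (f c)}) :=
      (Homeomorph.subRight (f c)).image_interior {z | φ z = φ (f c)}
    have hkint : y - f c ∈ interior (LinearMap.ker φ : Set (Fin m → ℂ)) := by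
      rw [hker, ← himg]
      exact ⟨y, hyint, rfl⟩
    have : LinearMap.ker φ = ⊤ :=
      (LinearMap.ker φ).eq_top_of_nonempty_interior' ⟨_, hkint⟩
    apply hφ0
    apply LinearMap.ext
    intro z
    have hz : z ∈ LinearMap.ker φ := this ▸ Submodule.mem_top
    simpa using hz
  · intro hpos x hx hfx
    have := hmin x hx
    rw [hfx] at this
    simp only [map_zero] at this
    exact absurd this (not_le.2 hpos)
end
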